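/- arXiv:2310.13821 — 7 statements merged into one kernel-verified Lean document; each statement's English description precedes it below -/
import Mathlib

section
/- Let X be a set and let k : X × X → ℂ be a kernel (a Hermitian map, i.e. k(y,x) = conj(k(x,y)) for all x,y ∈ X). Then k admits a positive decomposition, i.e. k = k₊ − k₋ with k₊ and k₋ positive definite kernels, if and only if there exist a complex Hilbert space V, a map Φ : X → V, and a self-adjoint unitary operator J : V → V (a fundamental symmetry) such that k(x,y) = ⟨J Φ(x), Φ(y)⟩ for all x,y ∈ X. -/
/-!
If `k = k₊ - k₋` with `k₊`, `k₋` positive definite, Moore's theorem writes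
`k₊ x y = ⟪φ₊ x, φ₊ y⟫` and `k₋ x y = ⟪φ₋ x, φ₋ y⟫` in Hilbert spaces `H₊`, `H₋`; then
`Φ = (φ₊, φ₋)` and the fundamental symmetry `J = 1 ⊕ (-1)` of `H₊ ⊕ H₋` represent `k`.
Conversely, for self-adjoint `J` the kernel `⟪J (Φ x), Φ y⟫` is the difference of the Gram
kernels of `(Φ + J Φ) / 2` and `(Φ - J Φ) / 2`, and Gram kernels are positive definite.
-/

open scoped ComplexOrder InnerProductSpace

/-- A kernel is positive definite if all its Gram-type sums are nonnegative. -/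
def IsPDKernel {X : Type} (k : X → X → ℂ) : Prop :=
  ∀ (N : ℕ) (x : Fin N → X) (c : Fin N → ℂ),
    0 ≤ ∑ i, ∑ j, (starRingEnd ℂ) (c i) * c j * k (x i) (x j)

universe u

open ComplexConjugate

namespace IsPDKernel

variable {X : Type} {k : X → X → ℂ}

theorem isHermitian (hk : IsPDKernel k) : (Matrix.of k).IsHermitian := by
  ext x y
  have hxx := Complex.nonneg_iff.1 (hk 1 ![x] ![1])
  have hyy := Complex.nonneg_iff.1 (hk 1 ![y] ![1])
  have h2 := Complex.nonneg_iff.1 (hk 2 ![x, y] ![1, 1])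
  have h3 := Complex.nonneg_iff.1 (hk 2 ![x, y] ![1, Complex.I])
  -- reality of the sums for `c = (1, 1)` and `c = (1, i)`: `Im (k x y + k y x) = 0` and
  -- `Re (k x y - k y x) = 0`
  simp only [Finset.univ_unique, Fin.default_eq_zero, Fin.isValue, Matrix.cons_val_fin_one,
    map_one, mul_one, one_mul, Finset.sum_const, Finset.card_singleton, one_smul,
    Fin.sum_univ_two, Matrix.cons_val_zero, Matrix.cons_val_one, Complex.add_re, Complex.add_im,
    Complex.conj_I, neg_mul, Complex.I_mul_I, neg_neg, Complex.mul_re, Complex.I_re, zero_mul,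
    Complex.I_im, zero_sub, Complex.neg_re, Complex.mul_im, zero_add, Complex.neg_im,
    Matrix.conjTranspose_apply, Matrix.of_apply, RCLike.star_def, Complex.ext_iff,
    Complex.conj_re, Complex.conj_im] at hxx hyy h2 h3 ⊢
  constructor <;> linarith

theorem finsupp_sum_nonneg (hk : IsPDKernel k) (f : X →₀ ℂ) :
    0 ≤ f.sum fun x a ↦ f.sum fun y b ↦ star a * k x y * b := by
  let e := f.support.equivFin
  convert hk _ (fun i ↦ (e.symm i : X)) (fun i ↦ f (e.symm i)) using 1
  simp only [Finsupp.sum, ← Finset.sum_coe_sort f.support, ← e.symm.sum_comp]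
  refine Finset.sum_congr rfl fun i _ ↦ Finset.sum_congr rfl fun j _ ↦ ?_
  simp only [RCLike.star_def]; ring

theorem posSemidef (hk : IsPDKernel k) : (Matrix.of k).PosSemidef :=
  ⟨hk.isHermitian, hk.finsupp_sum_nonneg⟩

end IsPDKernel

theorem Matrix.PosSemidef.map_algebraMap {𝕜 X : Type*} [RCLike 𝕜] {M : Matrix X X 𝕜}
    (hM : M.PosSemidef) : (M.map (algebraMap 𝕜 (𝕜 →L[𝕜] 𝕜))).PosSemidef := by
  have h := (RKHS.posSemidef_tfae (K := M.map (algebraMap 𝕜 (𝕜 →L[𝕜] 𝕜)))).out 2 0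
  refine h.1 ⟨?_, fun f ↦ ?_⟩
  · ext x y : 1
    simp only [Matrix.conjTranspose_apply, Matrix.map_apply, ← hM.1.apply x y,
      Algebra.algebraMap_eq_smul_one, star_smul, star_one]
  · convert (RCLike.nonneg_iff.1 (hM.2 f)).1 using 2
    refine Finsupp.sum_congr fun x _ ↦ Finsupp.sum_congr fun y _ ↦ ?_
    have hyx : conj (M y x) = M x y := hM.1.apply x y
    simp only [Matrix.map_apply, ContinuousLinearMap.algebraMap_apply, smul_eq_mul,
      RCLike.inner_apply, map_mul, hyx, RCLike.star_def]
    ring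

theorem Matrix.PosSemidef.exists_inner_eq {𝕜 X : Type u} [RCLike 𝕜] {M : Matrix X X 𝕜}
    (hM : M.PosSemidef) :
    ∃ (H : Type u) (_ : NormedAddCommGroup H) (_ : InnerProductSpace 𝕜 H) (_ : CompleteSpace H)
      (φ : X → H), ∀ x y, ⟪φ x, φ y⟫_𝕜 = M x y := by
  have : Fact (M.map (algebraMap 𝕜 (𝕜 →L[𝕜] 𝕜))).PosSemidef := ⟨hM.map_algebraMap⟩
  refine ⟨RKHS.OfKernel (M.map (algebraMap 𝕜 (𝕜 →L[𝕜] 𝕜))), inferInstance, inferInstance,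
    inferInstance, fun x ↦ RKHS.kerFun _ x 1, fun x y ↦ ?_⟩
  rw [← RKHS.kernel_inner, RKHS.OfKernel.kernel_ofKernel]
  simpa using hM.1.apply x y

section FundamentalSymmetry

variable (𝕜 : Type*) [RCLike 𝕜] (H₁ H₂ : Type*) [NormedAddCommGroup H₁] [InnerProductSpace 𝕜 H₁]
  [NormedAddCommGroup H₂] [InnerProductSpace 𝕜 H₂]

noncomputable def fundamentalSymmetry : WithLp 2 (H₁ × H₂) ≃ₗᵢ[𝕜] WithLp 2 (H₁ × H₂) :=
  LinearIsometryEquiv.withLpProdCongr 2 (.refl 𝕜 H₁) (.neg 𝕜)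

variable {𝕜 H₁ H₂}

theorem inner_fundamentalSymmetry_left (u w : WithLp 2 (H₁ × H₂)) :
    ⟪fundamentalSymmetry 𝕜 H₁ H₂ u, w⟫_𝕜 = ⟪u.fst, w.fst⟫_𝕜 - ⟪u.snd, w.snd⟫_𝕜 := by
  simp [fundamentalSymmetry, sub_eq_add_neg]

theorem inner_fundamentalSymmetry_right (u w : WithLp 2 (H₁ × H₂)) :
    ⟪u, fundamentalSymmetry 𝕜 H₁ H₂ w⟫_𝕜 = ⟪u.fst, w.fst⟫_𝕜 - ⟪u.snd, w.snd⟫_𝕜 := by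
  simp [fundamentalSymmetry, sub_eq_add_neg]

end FundamentalSymmetry

theorem isPDKernel_inner {X : Type} {V : Type*} [NormedAddCommGroup V] [InnerProductSpace ℂ V]
    (Φ : X → V) : IsPDKernel fun x y ↦ ⟪Φ x, Φ y⟫_ℂ := by
  intro N x c
  have hgram : ∑ i, ∑ j, conj (c i) * c j * ⟪Φ (x i), Φ (x j)⟫_ℂ =
      ⟪∑ i, c i • Φ (x i), ∑ j, c j • Φ (x j)⟫_ℂ := by
    simp_rw [sum_inner, inner_sum, inner_smul_left, inner_smul_right, mul_assoc]
  rw [hgram, inner_self_eq_norm_sq_to_K]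
  positivity

theorem inner_eq_inner_half_add_sub_inner_half_sub {𝕜 V : Type*} [RCLike 𝕜]
    [NormedAddCommGroup V] [InnerProductSpace 𝕜 V] {a a' b b' : V} (h : ⟪a', b⟫_𝕜 = ⟪a, b'⟫_𝕜) :
    ⟪a', b⟫_𝕜 = ⟪(2⁻¹ : 𝕜) • (a + a'), (2⁻¹ : 𝕜) • (b + b')⟫_𝕜 -
      ⟪(2⁻¹ : 𝕜) • (a - a'), (2⁻¹ : 𝕜) • (b - b')⟫_𝕜 := by
  simp only [inner_smul_left, inner_smul_right, inner_add_left, inner_add_right, inner_sub_left,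
    inner_sub_right, map_inv₀, map_ofNat, h]
  ring

theorem positive_decomposition_iff_fundamental_symmetry_general
    {X : Type} (k : X → X → ℂ) :
    (∃ kp km : X → X → ℂ, IsPDKernel kp ∧ IsPDKernel km ∧
        ∀ x y, k x y = kp x y - km x y) ↔
      ∃ (V : Type) (_ : NormedAddCommGroup V) (_ : InnerProductSpace ℂ V)
        (_ : CompleteSpace V) (Φ : X → V) (J : V →L[ℂ] V),
        (∀ u w : V, ⟪J u, w⟫_ℂ = ⟪u, J w⟫_ℂ) ∧
        (∀ u w : V, ⟪J u, J w⟫_ℂ = ⟪u, w⟫_ℂ) ∧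
        Function.Surjective J ∧
        ∀ x y, k x y = ⟪J (Φ x), Φ y⟫_ℂ := by
  constructor
  · rintro ⟨kp, km, hkp, hkm, hk⟩
    obtain ⟨H₁, _, _, _, φ₁, hφ₁⟩ := hkp.posSemidef.exists_inner_eq
    obtain ⟨H₂, _, _, _, φ₂, hφ₂⟩ := hkm.posSemidef.exists_inner_eq
    let J := fundamentalSymmetry ℂ H₁ H₂
    refine ⟨WithLp 2 (H₁ × H₂), inferInstance, inferInstance, inferInstance,
      fun x ↦ WithLp.toLp 2 (φ₁ x, φ₂ x), J.toContinuousLinearEquiv,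
      fun u w ↦ (inner_fundamentalSymmetry_left u w).trans
        (inner_fundamentalSymmetry_right u w).symm,
      J.inner_map_map, J.surjective, fun x y ↦ ?_⟩
    rw [hk]
    exact ((inner_fundamentalSymmetry_left _ _).trans
      (congrArg₂ (· - ·) (hφ₁ x y) (hφ₂ x y))).symm
  · rintro ⟨V, _, _, _, Φ, J, hJ, -, -, hk⟩
    refine ⟨_, _, isPDKernel_inner fun x ↦ (2⁻¹ : ℂ) • (Φ x + J (Φ x)),
      isPDKernel_inner fun x ↦ (2⁻¹ : ℂ) • (Φ x - J (Φ x)), fun x y ↦ ?_⟩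
    rw [hk]
    exact inner_eq_inner_half_add_sub_inner_half_sub (hJ _ _)

/-- a Hermitian kernel admits a positive decomposition iff it is of the
form `k x y = ⟪J (Φ x), Φ y⟫` for some Hilbert space `V`, map `Φ : X → V`, and
self-adjoint unitary (fundamental symmetry) `J` on `V`. -/
theorem positive_decomposition_iff_fundamental_symmetry
    {X : Type} (k : X → X → ℂ)
    (hk : ∀ x y, k y x = (starRingEnd ℂ) (k x y)) :
    (∃ kp km : X → X → ℂ, IsPDKernel kp ∧ IsPDKernel km ∧
        ∀ x y, k x y = kp x y - km x y) ↔
      ∃ (V : Type) (_ : NormedAddCommGroup V) (_ : InnerProductSpace ℂ V)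
        (_ : CompleteSpace V) (Φ : X → V) (J : V →L[ℂ] V),
        (∀ u w : V, ⟪J u, w⟫_ℂ = ⟪u, J w⟫_ℂ) ∧
        (∀ u w : V, ⟪J u, J w⟫_ℂ = ⟪u, w⟫_ℂ) ∧
        Function.Surjective J ∧
        ∀ x y, k x y = ⟪J (Φ x), Φ y⟫_ℂ :=
  positive_decomposition_iff_fundamental_symmetry_general k
end

section
/- Let G be a locally compact Hausdorff topological group and H a compact subgroup. Suppose f : G → ℂ is continuous, invariant on double cosets (f(hgh') = f(g) for all g ∈ G, h,h' ∈ H), and admits a continuous positive decomposition f = f₊ − f₋ with f₊, f₋ continuous positive definite functions on G. Then f admits a continuous positive decomposition into double-coset-invariant functions: there exist continuous PD functions f₊', f₋' : G → ℂ satisfying f₊'(hgh') = f₊'(g) and f₋'(hgh') = f₋'(g) for all g ∈ G, h,h' ∈ H, with f = f₊' − f₋'. -/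
open scoped ComplexOrder

/-- A function on a group is positive definite if all the matrices
`(f(gᵢ⁻¹gⱼ))ᵢⱼ` are positive semidefinite. -/
def IsPDFun {G : Type} [Group G] (f : G → ℂ) : Prop :=
  ∀ (N : ℕ) (g : Fin N → G) (c : Fin N → ℂ),
    0 ≤ ∑ i, ∑ j, (starRingEnd ℂ) (c i) * c j * f ((g i)⁻¹ * g j)

/-- A function on `G` is invariant on double cosets of `H` if
`f(hgh') = f(g)` for all `h, h' ∈ H`. -/
def IsDosetInvariant {G : Type} [Group G] (H : Subgroup G) (f : G → ℂ) : Prop :=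
  ∀ (g : G), ∀ h ∈ H, ∀ h' ∈ H, f (h * g * h') = f g

/-!
Average over `H × H` against a Haar probability measure `μ` of the compact group `H`:
`u ↦ (g ↦ ∫∫ u(a⁻¹ g b) dμ(a) dμ(b))`. This is linear, fixes `H`-bi-invariant functions,
preserves continuity and produces `H`-bi-invariant functions, so averaging `f₊` and `f₋` gives
the decomposition once averaging preserves positive definiteness. The positive-definiteness
sum of the average of `u` is the double integral over `H` of the positive semidefinite kernel
`Q(a, b) = ∑ c̄ᵢ cⱼ u((gᵢa)⁻¹(gⱼb))`, which is a limit of the nonnegative Riemann sums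
`∑ wₖ wₗ Q(pₖ, pₗ)` over finer and finer measurable partitions of `H`.

The integrals are iterated rather than taken against `μ.prod μ`: without second countability
the Borel σ-algebra of `H × H` is larger than the product σ-algebra, so continuous functions on
`H × H` need not be measurable for the product measure.
-/

open MeasureTheory Set Filter Topology Function

theorem IsPDFun.sum_nonneg {G : Type} [Group G] {f : G → ℂ} (hf : IsPDFun f)
    {ι : Type*} [Fintype ι] (g : ι → G) (c : ι → ℂ) :
    0 ≤ ∑ k, ∑ l, starRingEnd ℂ (c k) * c l * f ((g k)⁻¹ * g l) := by
  let e := (Fintype.equivFin ι).symm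
  exact (hf _ (g ∘ e) (c ∘ e)).trans_eq
    (Fintype.sum_equiv e _ _ fun _ => Fintype.sum_equiv e _ _ fun _ => rfl)

theorem Continuous.integrable_of_compactSpace {X E : Type*} [TopologicalSpace X]
    [CompactSpace X] [MeasurableSpace X] [OpensMeasurableSpace X] [NormedAddCommGroup E]
    {μ : Measure X} [IsFiniteMeasure μ] {f : X → E} (hf : Continuous f) : Integrable f μ :=
  hf.integrable_of_hasCompactSupport (.of_compactSpace f)

theorem continuous_integral_of_compactSpace {X Y E : Type*} [TopologicalSpace X]
    [TopologicalSpace Y] [CompactSpace Y] [MeasurableSpace Y] [OpensMeasurableSpace Y]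
    [NormedAddCommGroup E] [NormedSpace ℝ E] (μ : Measure Y) [IsFiniteMeasure μ]
    {f : X → Y → E} (hf : Continuous f.uncurry) : Continuous fun x => ∫ y, f x y ∂μ :=
  continuousOn_univ.mp <| continuousOn_integral_of_compact_support isCompact_univ
    hf.continuousOn fun _ _ _ hy => absurd (mem_univ _) hy

theorem exists_measurable_partition_subordinate {X : Type*} [TopologicalSpace X]
    [CompactSpace X] [MeasurableSpace X] [OpensMeasurableSpace X] {U : X → Set X}
    (hU : ∀ x, U x ∈ 𝓝 x) :
    ∃ (n : ℕ) (p : Fin n → X) (E : Fin n → Set X), (∀ k, MeasurableSet (E k)) ∧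
      Pairwise (Disjoint on E) ∧ ⋃ k, E k = univ ∧ ∀ k, E k ⊆ U (p k) := by
  obtain ⟨t, ht⟩ := finite_cover_nhds_interior hU
  let p : Fin t.card → X := fun k => t.equivFin.symm k
  let V : Fin t.card → Set X := fun k => interior (U (p k))
  refine ⟨t.card, p, disjointed V, fun k => ?_, disjoint_disjointed V, ?_,
    fun k => (disjointed_subset V k).trans interior_subset⟩
  · rw [disjointed_eq_inter_compl]
    exact isOpen_interior.measurableSet.inter
      (.iInter fun j => .iInter fun _ => isOpen_interior.measurableSet.compl)
  · rw [iUnion_disjointed]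
    refine eq_univ_of_univ_subset (ht ▸ iUnion₂_subset fun x hx => ?_)
    exact subset_iUnion_of_subset (t.equivFin ⟨x, hx⟩) (by simp [V, p])

theorem exists_weighted_sum_approx_integral {X Y E : Type*} [TopologicalSpace X]
    [CompactSpace X] [MeasurableSpace X] [OpensMeasurableSpace X] [TopologicalSpace Y]
    [CompactSpace Y] [NormedAddCommGroup E] [NormedSpace ℝ E] [CompleteSpace E]
    (μ : Measure X) [IsFiniteMeasure μ] {F : Y → X → E} (hF : Continuous F.uncurry) {ε : ℝ} (hε : 0 < ε) :
    ∃ (n : ℕ) (w : Fin n → ℝ) (p : Fin n → X), (∀ k, 0 ≤ w k) ∧ ∑ k, w k = μ.real univ ∧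
      ∀ y, ‖∫ x, F y x ∂μ - ∑ k, w k • F y (p k)‖ ≤ ε * μ.real univ := by
  have hU : ∀ x₀, {x | ∀ y, dist (F y x) (F y x₀) < ε} ∈ 𝓝 x₀ := by
    intro x₀
    obtain ⟨v, hv, hvF⟩ := isCompact_univ.mem_uniformity_of_prod (f := fun x y => F y x)
      (hF.comp continuous_swap).continuousOn (mem_univ x₀) (Metric.dist_mem_uniformity hε)
    rw [nhdsWithin_univ] at hv
    exact mem_of_superset hv fun x hx y => hvF x hx y (mem_univ y)
  obtain ⟨n, p, E, hEm, hEd, hEu, hEU⟩ := exists_measurable_partition_subordinate hU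
  have hint : ∀ y, Integrable (F y) μ := fun y =>
    (hF.comp (Continuous.prodMk_right y)).integrable_of_compactSpace
  refine ⟨n, fun k => μ.real (E k), p, fun k => measureReal_nonneg, ?_, fun y => ?_⟩
  · rw [← measureReal_iUnion_fintype hEd hEm, hEu]
  calc ‖∫ x, F y x ∂μ - ∑ k, μ.real (E k) • F y (p k)‖
      = ‖∑ k, ∫ x in E k, (F y x - F y (p k)) ∂μ‖ := by
        rw [← setIntegral_univ, ← hEu, integral_iUnion_fintype hEm hEd
          (fun k => (hint y).integrableOn), ← Finset.sum_sub_distrib]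
        congr 2 with k
        rw [integral_sub (hint y).integrableOn (integrableOn_const (measure_ne_top μ _)),
          setIntegral_const]
    _ ≤ ∑ k, ε * μ.real (E k) := norm_sum_le_of_le _ fun k _ =>
        norm_setIntegral_le_of_norm_le_const (measure_lt_top μ _) fun x hx =>
          (dist_eq_norm (F y x) (F y (p k)) ▸ (hEU k hx y).le)
    _ = ε * μ.real univ := by
      rw [← Finset.mul_sum, ← measureReal_iUnion_fintype hEd hEm, hEu]

theorem exists_double_weighted_sum_approx_integral_integral {X E : Type*} [TopologicalSpace X]
    [CompactSpace X] [MeasurableSpace X] [OpensMeasurableSpace X] [NormedAddCommGroup E]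
    [NormedSpace ℝ E] [CompleteSpace E] (μ : Measure X) [IsFiniteMeasure μ] {Q : X → X → E}
    (hQ : Continuous Q.uncurry) {ε : ℝ} (hε : 0 < ε) :
    ∃ (n : ℕ) (w : Fin n → ℝ) (p : Fin n → X),
      ‖∫ a, ∫ b, Q a b ∂μ ∂μ - ∑ k, ∑ l, (w k * w l) • Q (p k) (p l)‖ ≤
        2 * ε * μ.real univ ^ 2 := by
  set T := μ.real univ
  -- approximating the pair `(Q y x, Q x y)` gives one set of weights and nodes that works in
  -- both variables
  obtain ⟨n, w, p, hw, hwT, hF⟩ := exists_weighted_sum_approx_integral μ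
    (F := fun y x => (Q y x, Q x y)) (by fun_prop) hε
  have hQ₁ : ∀ a, Continuous (Q a) := fun a => hQ.comp (.prodMk_right a)
  have hQ₂ : ∀ b, Continuous (Q · b) := fun b => hQ.comp (.prodMk_left b)
  have hrow : ∀ a, ‖∫ b, Q a b ∂μ - ∑ l, w l • Q a (p l)‖ ≤ ε * T := fun a => by
    refine le_trans (le_of_eq ?_) ((norm_fst_le _).trans (hF a))
    simp [integral_pair (hQ₁ a).integrable_of_compactSpace (hQ₂ a).integrable_of_compactSpace,
      Prod.fst_sum]
  have hcol : ∀ l, ‖∫ a, Q a (p l) ∂μ - ∑ k, w k • Q (p k) (p l)‖ ≤ ε * T := fun l => by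
    refine le_trans (le_of_eq ?_) ((norm_snd_le _).trans (hF (p l)))
    simp [integral_pair (hQ₁ (p l)).integrable_of_compactSpace
      (hQ₂ (p l)).integrable_of_compactSpace, Prod.snd_sum]
  have hsplit : ∫ a, ∫ b, Q a b ∂μ ∂μ - ∑ k, ∑ l, (w k * w l) • Q (p k) (p l) =
      ∫ a, (∫ b, Q a b ∂μ - ∑ l, w l • Q a (p l)) ∂μ +
        ∑ l, w l • (∫ a, Q a (p l) ∂μ - ∑ k, w k • Q (p k) (p l)) := by
    have hsum : Continuous fun a => ∑ l, w l • Q a (p l) := by fun_prop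
    rw [integral_sub (continuous_integral_of_compactSpace μ hQ).integrable_of_compactSpace
        hsum.integrable_of_compactSpace,
      integral_finsetSum (f := fun l a => w l • Q a (p l)) _
        fun l _ => ((hQ₂ (p l)).const_smul (w l)).integrable_of_compactSpace,
      Finset.sum_comm]
    simp only [integral_smul, smul_sub, Finset.sum_sub_distrib, Finset.smul_sum, smul_smul,
      sub_add_sub_cancel, mul_comm]
  refine ⟨n, w, p, ?_⟩
  calc _ ≤ ‖∫ a, (∫ b, Q a b ∂μ - ∑ l, w l • Q a (p l)) ∂μ‖ +
        ‖∑ l, w l • (∫ a, Q a (p l) ∂μ - ∑ k, w k • Q (p k) (p l))‖ :=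
        hsplit ▸ norm_add_le _ _
    _ ≤ ε * T * T + ∑ l, w l * (ε * T) := by
      gcongr
      · exact norm_integral_le_of_norm_le_const (ae_of_all _ hrow)
      · refine norm_sum_le_of_le _ fun l _ => ?_
        rw [norm_smul, Real.norm_of_nonneg (hw l)]
        exact mul_le_mul_of_nonneg_left (hcol l) (hw l)
    _ = 2 * ε * T ^ 2 := by rw [← Finset.sum_mul, hwT]; ring

theorem integral_integral_nonneg_of_posSemidef_kernel {X : Type*} [TopologicalSpace X]
    [CompactSpace X] [MeasurableSpace X] [OpensMeasurableSpace X] (μ : Measure X)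
    [IsFiniteMeasure μ] {Q : X → X → ℂ} (hQ : Continuous Q.uncurry)
    (hpsd : ∀ (n : ℕ) (p : Fin n → X) (w : Fin n → ℝ),
      0 ≤ ∑ k, ∑ l, (w k * w l) • Q (p k) (p l)) :
    0 ≤ ∫ a, ∫ b, Q a b ∂μ ∂μ := by
  refine (isClosed_Ici (a := (0 : ℂ))).closure_subset
    (Metric.mem_closure_iff.mpr fun δ hδ => ?_)
  set C := 2 * μ.real univ ^ 2 + 1
  obtain ⟨n, w, p, happrox⟩ :=
    exists_double_weighted_sum_approx_integral_integral μ hQ (ε := δ / C) (by positivity)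
  refine ⟨_, hpsd n p w, (dist_eq_norm _ _).trans_lt (happrox.trans_lt ?_)⟩
  rw [show 2 * (δ / C) * μ.real univ ^ 2 = δ * (2 * μ.real univ ^ 2 / C) by ring]
  exact mul_lt_of_lt_one_right hδ ((div_lt_one (by positivity)).2 (by linarith))

theorem integral_integral_finsetSum {ι X Y E : Type*} [TopologicalSpace X] [CompactSpace X]
    [MeasurableSpace X] [OpensMeasurableSpace X] [TopologicalSpace Y] [CompactSpace Y]
    [MeasurableSpace Y] [OpensMeasurableSpace Y] [NormedAddCommGroup E] [NormedSpace ℝ E]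
    (μ : Measure X) [IsFiniteMeasure μ] (ν : Measure Y) [IsFiniteMeasure ν] (s : Finset ι)
    {F : ι → X → Y → E} (hF : ∀ i ∈ s, Continuous (F i).uncurry) :
    ∫ x, ∫ y, ∑ i ∈ s, F i x y ∂ν ∂μ = ∑ i ∈ s, ∫ x, ∫ y, F i x y ∂ν ∂μ := by
  calc ∫ x, ∫ y, ∑ i ∈ s, F i x y ∂ν ∂μ = ∫ x, ∑ i ∈ s, ∫ y, F i x y ∂ν ∂μ := by
        congr with x
        exact integral_finsetSum s fun i hi =>
          ((hF i hi).comp (Continuous.prodMk_right x)).integrable_of_compactSpace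
    _ = ∑ i ∈ s, ∫ x, ∫ y, F i x y ∂ν ∂μ := integral_finsetSum s fun i hi =>
        (continuous_integral_of_compactSpace ν (hF i hi)).integrable_of_compactSpace

theorem integral_integral_sub {X Y E : Type*} [TopologicalSpace X] [CompactSpace X]
    [MeasurableSpace X] [OpensMeasurableSpace X] [TopologicalSpace Y] [CompactSpace Y]
    [MeasurableSpace Y] [OpensMeasurableSpace Y] [NormedAddCommGroup E] [NormedSpace ℝ E]
    (μ : Measure X) [IsFiniteMeasure μ] (ν : Measure Y) [IsFiniteMeasure ν]
    {F F' : X → Y → E} (hF : Continuous F.uncurry) (hF' : Continuous F'.uncurry) :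
    ∫ x, ∫ y, F x y - F' x y ∂ν ∂μ = ∫ x, ∫ y, F x y ∂ν ∂μ - ∫ x, ∫ y, F' x y ∂ν ∂μ := by
  rw [← integral_sub (continuous_integral_of_compactSpace ν hF).integrable_of_compactSpace
    (continuous_integral_of_compactSpace ν hF').integrable_of_compactSpace]
  congr with x
  exact integral_sub (hF.comp (.prodMk_right x)).integrable_of_compactSpace
    (hF'.comp (.prodMk_right x)).integrable_of_compactSpace

theorem exists_isProbabilityMeasure_isMulLeftInvariant (K : Type*) [Group K]
    [TopologicalSpace K] [IsTopologicalGroup K] [CompactSpace K] [MeasurableSpace K]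
    [BorelSpace K] :
    ∃ μ : Measure K, IsProbabilityMeasure μ ∧ μ.IsMulLeftInvariant := by
  refine ⟨Measure.haarMeasure ⊤, ⟨?_⟩, inferInstance⟩
  rw [← TopologicalSpace.PositiveCompacts.coe_top]
  exact Measure.haarMeasure_self

section DoubleCosetAverage

variable {G : Type} [Group G] {H : Subgroup G} [MeasurableSpace H] (μ : Measure H)

noncomputable def doubleCosetAverage (u : G → ℂ) (g : G) : ℂ :=
  ∫ a, ∫ b, u ((a : G)⁻¹ * g * b) ∂μ ∂μ

theorem doubleCosetAverage_eq_self [IsProbabilityMeasure μ] {u : G → ℂ}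
    (hu : IsDosetInvariant H u) : doubleCosetAverage μ u = u := by
  ext g
  simp [doubleCosetAverage, hu g _ (inv_mem (SetLike.coe_mem _)) _ (SetLike.coe_mem _)]

theorem isDosetInvariant_doubleCosetAverage [MeasurableMul H] [μ.IsMulLeftInvariant]
    (u : G → ℂ) : IsDosetInvariant H (doubleCosetAverage μ u) := by
  intro g h hh h' hh'
  have right : ∀ x : G, ∫ b, u (x * h' * b) ∂μ = ∫ b, u (x * b) ∂μ := fun x => by
    simpa [mul_assoc] using integral_mul_left_eq_self (μ := μ) (fun b => u (x * b)) ⟨h', hh'⟩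
  have left : ∀ φ : G → ℂ, ∫ a, φ ((a : G)⁻¹ * h) ∂μ = ∫ a, φ (a : G)⁻¹ ∂μ := fun φ => by
    simpa using integral_mul_left_eq_self (μ := μ) (fun a => φ (a : G)⁻¹) ⟨h, hh⟩⁻¹
  simp only [doubleCosetAverage, ← mul_assoc, right]
  exact left fun x => ∫ b, u (x * g * b) ∂μ

variable [TopologicalSpace G] [IsTopologicalGroup G] [OpensMeasurableSpace H] [CompactSpace H]
  [IsFiniteMeasure μ] {u v : G → ℂ}

theorem continuous_doubleCosetAverage (hu : Continuous u) :
    Continuous (doubleCosetAverage μ u) :=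
  continuous_integral_of_compactSpace μ (f := fun g a => ∫ b, u ((a : G)⁻¹ * g * b) ∂μ) <|
    continuous_integral_of_compactSpace μ (f := fun (p : G × H) b => u ((p.2 : G)⁻¹ * p.1 * b))
      (by fun_prop)

theorem doubleCosetAverage_sub (hu : Continuous u) (hv : Continuous v) :
    doubleCosetAverage μ (u - v) = doubleCosetAverage μ u - doubleCosetAverage μ v :=
  funext fun _ => integral_integral_sub μ μ (by fun_prop) (by fun_prop)

theorem isPDFun_doubleCosetAverage (hc : Continuous u) (hu : IsPDFun u) :
    IsPDFun (doubleCosetAverage μ u) := by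
  intro N g c
  let Q : H → H → ℂ := fun a b =>
    ∑ i, ∑ j, starRingEnd ℂ (c i) * c j * u ((g i * a)⁻¹ * (g j * b))
  have hQ : Continuous Q.uncurry := by fun_prop
  have hpsd : ∀ (n : ℕ) (p : Fin n → H) (w : Fin n → ℝ),
      0 ≤ ∑ k, ∑ l, (w k * w l) • Q (p k) (p l) := by
    intro n p w
    convert hu.sum_nonneg (fun q : Fin n × Fin N => g q.2 * p q.1)
      (fun q => (w q.1 : ℂ) * c q.2) using 1
    simp only [Q, Fintype.sum_prod_type, Finset.smul_sum, Complex.real_smul, Complex.ofReal_mul,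
      map_mul, Complex.conj_ofReal]
    refine Finset.sum_congr rfl fun k _ => ?_
    rw [Finset.sum_comm]
    refine Finset.sum_congr rfl fun i _ => Finset.sum_congr rfl fun l _ => ?_
    exact Finset.sum_congr rfl fun j _ => by ring
  have hsum_eq : ∑ i, ∑ j, starRingEnd ℂ (c i) * c j * doubleCosetAverage μ u ((g i)⁻¹ * g j) =
      ∫ a, ∫ b, Q a b ∂μ ∂μ := by
    rw [integral_integral_finsetSum μ μ _ fun i _ => by fun_prop]
    refine Finset.sum_congr rfl fun i _ => ?_
    rw [integral_integral_finsetSum μ μ _ fun j _ => by fun_prop]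
    refine Finset.sum_congr rfl fun j _ => ?_
    simp only [doubleCosetAverage, integral_const_mul, mul_inv_rev, mul_assoc]
  exact hsum_eq ▸ integral_integral_nonneg_of_posSemidef_kernel μ hQ hpsd

end DoubleCosetAverage

theorem doset_invariant_positive_decomposition_of_compact_subgroup_general
    {G : Type} [Group G] [TopologicalSpace G] [IsTopologicalGroup G]
    (H : Subgroup G) (hH : IsCompact (H : Set G))
    (f : G → ℂ) (hfinv : IsDosetInvariant H f)
    (fp fm : G → ℂ)
    (hfpc : Continuous fp) (hfpPD : IsPDFun fp)
    (hfmc : Continuous fm) (hfmPD : IsPDFun fm)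
    (hdec : ∀ g, f g = fp g - fm g) :
    ∃ fp' fm' : G → ℂ,
      Continuous fp' ∧ IsPDFun fp' ∧ IsDosetInvariant H fp' ∧
      Continuous fm' ∧ IsPDFun fm' ∧ IsDosetInvariant H fm' ∧
      ∀ g, f g = fp' g - fm' g := by
  borelize ↥H
  have : CompactSpace H := isCompact_iff_compactSpace.mp hH
  obtain ⟨μ, _, _⟩ := exists_isProbabilityMeasure_isMulLeftInvariant H
  refine ⟨doubleCosetAverage μ fp, doubleCosetAverage μ fm,
    continuous_doubleCosetAverage μ hfpc, isPDFun_doubleCosetAverage μ hfpc hfpPD,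
    isDosetInvariant_doubleCosetAverage μ fp,
    continuous_doubleCosetAverage μ hfmc, isPDFun_doubleCosetAverage μ hfmc hfmPD,
    isDosetInvariant_doubleCosetAverage μ fm, congrFun (?_ : f = _ - _)⟩
  rw [← doubleCosetAverage_sub μ hfpc hfmc, show fp - fm = f from (funext hdec).symm,
    doubleCosetAverage_eq_self μ hfinv]

/-- on a locally compact group `G` with compact subgroup `H`, a continuous
double-coset-invariant function with a continuous positive decomposition admits a
continuous positive decomposition into double-coset-invariant functions. -/
theorem doset_invariant_positive_decomposition_of_compact_subgroup
    {G : Type} [Group G] [TopologicalSpace G] [IsTopologicalGroup G]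
    [LocallyCompactSpace G] [T2Space G]
    (H : Subgroup G) (hH : IsCompact (H : Set G))
    (f : G → ℂ) (hfc : Continuous f) (hfinv : IsDosetInvariant H f)
    (fp fm : G → ℂ)
    (hfpc : Continuous fp) (hfpPD : IsPDFun fp)
    (hfmc : Continuous fm) (hfmPD : IsPDFun fm)
    (hdec : ∀ g, f g = fp g - fm g) :
    ∃ fp' fm' : G → ℂ,
      Continuous fp' ∧ IsPDFun fp' ∧ IsDosetInvariant H fp' ∧
      Continuous fm' ∧ IsPDFun fm' ∧ IsDosetInvariant H fm' ∧
      ∀ g, f g = fp' g - fm' g :=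
  doset_invariant_positive_decomposition_of_compact_subgroup_general H hH f hfinv fp fm hfpc hfpPD
    hfmc hfmPD hdec
end

section
/- Let G be a locally compact Hausdorff topological group and H a closed subgroup. Then B_ℝ(G) ∩ C_ℂ(H\G/H) = B_ℝ(H\G/H); that is, a continuous function f : G → ℂ that is invariant on double cosets (f(hgh') = f(g) for all g ∈ G, h,h' ∈ H) admits a continuous positive decomposition f = f₊ − f₋ into continuous positive definite functions on G if and only if it admits a continuous positive decomposition in which f₊ and f₋ are themselves invariant on double cosets. -/
open scoped ComplexOrder

/-!
Let `f = f₊ - f₋` with `f₊, f₋` positive definite. In the GNS pre-Hilbert space of `φ` (finitely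
supported `c : G → ℂ`, `⟪c, d⟫ = ∑ conj (c x) d y φ (x⁻¹ y)`) the matrix coefficient
`g ↦ ⟪μ, λ(g) μ⟫ = ∑ conj (μ x) μ y φ (x⁻¹ g y)` of the left regular representation is
positive definite, and for `μ` supported on `H` with total mass one, the coefficients for `f₊` and
`f₋` differ by exactly `f`, since `f` is constant on `H g H`.
Choose such `μₙ` minimising the norm for `φ = f₊ + f₋`. The parallelogram law makes `(μₙ)`
Cauchy, and since left translation by `h ∈ H` is an isometry preserving the constraint set,
`λ(h) μₙ - μₙ → 0`. Hence the coefficients converge uniformly, for `f₊` and `f₋` alike, to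
continuous positive definite functions that are invariant under `H` on both sides, and their
difference is still `f`.
-/

open scoped InnerProductSpace ComplexConjugate
open Filter Topology Set

section Minimization

variable {E : Type*} [SeminormedAddCommGroup E] [InnerProductSpace ℝ E]

theorem norm_sub_sq_le_of_convex {K : Set E} (hK : Convex ℝ K) {δ : ℝ} (hδ : 0 ≤ δ)
    (hδK : ∀ w ∈ K, δ ≤ ‖w‖) {u v : E} (hu : u ∈ K) (hv : v ∈ K) :
    ‖u - v‖ ^ 2 ≤ 2 * ‖u‖ ^ 2 + 2 * ‖v‖ ^ 2 - 4 * δ ^ 2 := by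
  have hmid : δ ≤ ‖(2⁻¹ : ℝ) • (u + v)‖ :=
    hδK _ (by simpa [smul_add] using hK hu hv (by norm_num) (by norm_num) (by norm_num))
  rw [norm_smul, Real.norm_of_nonneg (by norm_num)] at hmid
  have := parallelogram_law_with_norm ℝ u v
  nlinarith [pow_le_pow_left₀ hδ hmid 2]

theorem exists_cauchySeq_minimizing {K : Set E} (hK : Convex ℝ K) (hne : K.Nonempty) :
    ∃ v : ℕ → E, (∀ n, v n ∈ K) ∧ CauchySeq v ∧
      ∀ f : E → E, (∀ w, ‖f w‖ = ‖w‖) → MapsTo f K K →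
        Tendsto (fun n => f (v n) - v n) atTop (𝓝 0) := by
  set δ := sInf ((‖·‖) '' K)
  have hbdd : BddBelow ((‖·‖) '' K) := ⟨0, by rintro _ ⟨w, -, rfl⟩; exact norm_nonneg w⟩
  have hδK : ∀ w ∈ K, δ ≤ ‖w‖ := fun w hw => csInf_le hbdd (mem_image_of_mem _ hw)
  have hδ : 0 ≤ δ := le_csInf (hne.image _) (by rintro _ ⟨w, -, rfl⟩; exact norm_nonneg w)
  obtain ⟨r, -, hr, hrK⟩ := exists_seq_tendsto_sInf (hne.image (‖·‖)) hbdd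
  choose v hvK hv using hrK
  set e : ℕ → ℝ := fun n => 2 * (‖v n‖ ^ 2 - δ ^ 2)
  have he : Tendsto e atTop (𝓝 0) := by
    have := ((hr.pow 2).sub_const (δ ^ 2)).const_mul 2
    rw [sub_self, mul_zero] at this
    simpa only [e, ← hv] using this
  have hdist : ∀ u ∈ K, ∀ w ∈ K, ‖u - w‖ ^ 2 ≤ 2 * (‖u‖ ^ 2 - δ ^ 2) + 2 * (‖w‖ ^ 2 - δ ^ 2) :=
    fun u hu w hw => by linarith [norm_sub_sq_le_of_convex hK hδ hδK hu hw]
  refine ⟨v, hvK, ?_, fun f hf hfK => ?_⟩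
  · rw [Metric.cauchySeq_iff]
    intro ε hε
    obtain ⟨N, hN⟩ := eventually_atTop.1 (he.eventually (gt_mem_nhds (half_pos (pow_pos hε 2))))
    refine ⟨N, fun m hm n hn => ?_⟩
    rw [dist_eq_norm]
    exact lt_of_pow_lt_pow_left₀ 2 hε.le
      (by linarith [hdist _ (hvK m) _ (hvK n), hN m hm, hN n hn])
  · have hsq : ∀ n, ‖f (v n) - v n‖ ≤ √(2 * e n) := fun n => by
      refine Real.le_sqrt_of_sq_le ?_
      have := hdist _ (hfK (hvK n)) _ (hvK n)
      rw [hf] at this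
      linarith
    have h0 : Tendsto (fun n => √(2 * e n)) atTop (𝓝 0) := by
      simpa using ((he.const_mul 2).sqrt)
    exact tendsto_zero_iff_norm_tendsto_zero.2 (squeeze_zero (fun _ => norm_nonneg _) hsq h0)

end Minimization

namespace IsPDFun

variable {G : Type} [Group G] {φ ψ : G → ℂ}

theorem add (hφ : IsPDFun φ) (hψ : IsPDFun ψ) : IsPDFun (φ + ψ) := fun N g c => by
  simpa only [Pi.add_apply, mul_add, Finset.sum_add_distrib] using add_nonneg (hφ N g c) (hψ N g c)

theorem apply_inv (hφ : IsPDFun φ) (g : G) : φ g⁻¹ = conj (φ g) := by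
  have h₁ := Complex.nonneg_iff.1 (hφ 1 ![1] ![1])
  have h₂ := Complex.nonneg_iff.1 (hφ 2 ![1, g] ![1, 1])
  have h₃ := Complex.nonneg_iff.1 (hφ 2 ![1, g] ![1, Complex.I])
  simp only [Finset.univ_unique, Fin.default_eq_zero, Fin.isValue, Matrix.cons_val_fin_one,
    map_one, mul_one, inv_one, one_mul, Finset.sum_const, Finset.card_singleton, one_smul,
    Fin.sum_univ_two, Matrix.cons_val_zero, Matrix.cons_val_one, inv_mul_cancel, Complex.add_re,
    Complex.add_im, Complex.conj_I, neg_mul, Complex.I_mul_I, neg_neg, Complex.mul_re,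
    Complex.I_re, zero_mul, Complex.I_im, zero_sub, Complex.neg_re, Complex.mul_im, zero_add,
    Complex.neg_im] at h₁ h₂ h₃
  apply Complex.ext <;> simp only [Complex.conj_re, Complex.conj_im] <;> linarith

theorem finsupp_sum_nonneg (hφ : IsPDFun φ) (c : G →₀ ℂ) :
    0 ≤ c.sum fun x a => c.sum fun y b => conj a * b * φ (x⁻¹ * y) := by
  set e := c.support.equivFin.symm
  have hsum : ∀ F : G → ℂ, ∑ x ∈ c.support, F x = ∑ i, F (e i) := fun F => by
    rw [← Finset.sum_coe_sort]; exact (e.sum_comp _).symm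
  simpa only [Finsupp.sum, hsum] using hφ _ (fun i => e i) (fun i => c (e i))

theorem of_tendsto {ι : Type*} {l : Filter ι} [l.NeBot] {F : ι → G → ℂ}
    (hF : ∀ n, IsPDFun (F n)) (hlim : ∀ g, Tendsto (fun n => F n g) l (𝓝 (φ g))) :
    IsPDFun φ := fun N g c =>
  ge_of_tendsto (tendsto_finsetSum _ fun _ _ => tendsto_finsetSum _ fun _ _ =>
    (hlim _).const_mul _) (Eventually.of_forall fun n => hF n N g c)

end IsPDFun

section UnitaryRepresentation

variable {G : Type} [Group G] {E : Type*} [SeminormedAddCommGroup E] [InnerProductSpace ℂ E]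
  (ρ : G →* (E ≃ₗᵢ[ℂ] E))

theorem norm_inner_sub_inner_le {𝕜 F : Type*} [RCLike 𝕜] [SeminormedAddCommGroup F]
    [InnerProductSpace 𝕜 F] (a b a' b' : F) :
    ‖⟪a, b⟫_𝕜 - ⟪a', b'⟫_𝕜‖ ≤ ‖a - a'‖ * ‖b‖ + ‖a'‖ * ‖b - b'‖ := by
  rw [show ⟪a, b⟫_𝕜 - ⟪a', b'⟫_𝕜 = ⟪a - a', b⟫_𝕜 + ⟪a', b - b'⟫_𝕜 by
    rw [inner_sub_left, inner_sub_right]; ring]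
  exact (norm_add_le _ _).trans (add_le_add (norm_inner_le_norm _ _) (norm_inner_le_norm _ _))

theorem apply_apply_eq_map_mul (a b : G) (v : E) : ρ a (ρ b v) = ρ (a * b) v := by
  rw [map_mul, LinearIsometryEquiv.coe_mul, Function.comp_apply]

theorem isPDFun_inner_apply (ξ : E) : IsPDFun fun g => ⟪ξ, ρ g ξ⟫_ℂ := fun N g c => by
  have hcoeff : ∀ i j, ⟪ξ, ρ ((g i)⁻¹ * g j) ξ⟫_ℂ = ⟪ρ (g i) ξ, ρ (g j) ξ⟫_ℂ := fun i j => by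
    rw [← (ρ (g i)).inner_map_map, apply_apply_eq_map_mul, mul_inv_cancel_left]
  set v := ∑ i, c i • ρ (g i) ξ
  calc (0 : ℂ) ≤ ⟪v, v⟫_ℂ :=
        Complex.nonneg_iff.2 ⟨inner_self_nonneg (𝕜 := ℂ), (inner_self_im (𝕜 := ℂ) v).symm⟩
    _ = _ := by
      simp only [v, sum_inner, inner_sum, inner_smul_left, inner_smul_right, hcoeff,
        Finset.mul_sum]
      rw [Finset.sum_comm]
      exact Finset.sum_congr rfl fun _ _ => Finset.sum_congr rfl fun _ _ => by ring

theorem norm_inner_apply_sub_inner_apply_le (a b : E) (g : G) :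
    ‖⟪a, ρ g a⟫_ℂ - ⟪b, ρ g b⟫_ℂ‖ ≤ ‖a - b‖ * (‖a‖ + ‖b‖) := by
  have := norm_inner_sub_inner_le (𝕜 := ℂ) a (ρ g a) b (ρ g b)
  rw [← map_sub, LinearIsometryEquiv.norm_map, LinearIsometryEquiv.norm_map] at this
  linarith

theorem exists_tendstoUniformly_inner_apply {ξ : ℕ → E} (hξ : CauchySeq ξ) :
    ∃ F : G → ℂ, TendstoUniformly (fun n g => ⟪ξ n, ρ g (ξ n)⟫_ℂ) F atTop := by
  obtain ⟨R, hR⟩ := isBounded_iff_forall_norm_le.1 hξ.isBounded_range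
  have hR0 : 0 ≤ R := (norm_nonneg _).trans (hR _ (mem_range_self 0))
  have hunif : UniformCauchySeqOn (fun n g => ⟪ξ n, ρ g (ξ n)⟫_ℂ) atTop univ := by
    rw [Metric.uniformCauchySeqOn_iff]
    intro ε hε
    obtain ⟨N, hN⟩ := Metric.cauchySeq_iff.1 hξ (ε / (2 * R + 1)) (by positivity)
    refine ⟨N, fun m hm n hn g _ => ?_⟩
    have hmn := hN m hm n hn
    rw [dist_eq_norm] at hmn ⊢
    calc _ ≤ ‖ξ m - ξ n‖ * (‖ξ m‖ + ‖ξ n‖) := norm_inner_apply_sub_inner_apply_le ρ _ _ g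
      _ ≤ ε / (2 * R + 1) * (2 * R) := by
        gcongr
        linarith [hR _ (mem_range_self m), hR _ (mem_range_self n)]
      _ < ε := by
        rw [div_mul_eq_mul_div, div_lt_iff₀ (by positivity)]
        nlinarith
  choose F hF using fun g => cauchySeq_tendsto_of_complete (hunif.cauchySeq (mem_univ g))
  exact ⟨F, tendstoUniformlyOn_univ.1 (hunif.tendstoUniformlyOn_of_tendsto fun g _ => hF g)⟩

theorem isDosetInvariant_of_tendsto_inner_apply {H : Subgroup G} {ξ : ℕ → E}
    (hξ : CauchySeq ξ) (hH : ∀ h ∈ H, Tendsto (fun n => ρ h (ξ n) - ξ n) atTop (𝓝 0))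
    {F : G → ℂ} (hF : ∀ g, Tendsto (fun n => ⟪ξ n, ρ g (ξ n)⟫_ℂ) atTop (𝓝 (F g))) :
    IsDosetInvariant H F := by
  intro g h hh h' hh'
  obtain ⟨R, hR⟩ := isBounded_iff_forall_norm_le.1 hξ.isBounded_range
  have hshift : ∀ v : E, ⟪v, ρ (h * g * h') v⟫_ℂ = ⟪ρ h⁻¹ v, ρ g (ρ h' v)⟫_ℂ := fun v => by
    rw [← (ρ h⁻¹).inner_map_map v, apply_apply_eq_map_mul, apply_apply_eq_map_mul]
    group
  have hbound : ∀ n, ‖⟪ξ n, ρ (h * g * h') (ξ n)⟫_ℂ - ⟪ξ n, ρ g (ξ n)⟫_ℂ‖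
      ≤ ‖ρ h⁻¹ (ξ n) - ξ n‖ * R + R * ‖ρ h' (ξ n) - ξ n‖ := fun n => by
    have hξn := hR _ (mem_range_self n)
    have := norm_inner_sub_inner_le (𝕜 := ℂ) (ρ h⁻¹ (ξ n)) (ρ g (ρ h' (ξ n))) (ξ n) (ρ g (ξ n))
    rw [← hshift, ← map_sub, LinearIsometryEquiv.norm_map, LinearIsometryEquiv.norm_map,
      LinearIsometryEquiv.norm_map] at this
    refine this.trans (add_le_add ?_ ?_) <;> gcongr
  have hlim : Tendsto (fun n => ‖ρ h⁻¹ (ξ n) - ξ n‖ * R + R * ‖ρ h' (ξ n) - ξ n‖) atTop (𝓝 0) := by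
    simpa using ((hH _ (inv_mem hh)).norm.mul_const R).add ((hH h' hh').norm.const_mul R)
  have hdiff := squeeze_zero (fun _ => norm_nonneg _) hbound hlim
  exact sub_eq_zero.1 (tendsto_nhds_unique ((hF _).sub (hF g))
    (tendsto_zero_iff_norm_tendsto_zero.2 hdiff))

end UnitaryRepresentation

section UnitMass

variable {G : Type} [Group G]

/-- Finitely supported complex weights on `H` of total mass `∑ x, c x = 1`. -/
def unitMassOn (H : Subgroup G) : Set (G →₀ ℂ) :=
  {c | c ∈ Finsupp.supported ℂ ℂ (H : Set G) ∧
    Finsupp.linearCombination ℂ (fun _ => (1 : ℂ)) c = 1}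

theorem single_one_mem_unitMassOn (H : Subgroup G) : Finsupp.single 1 1 ∈ unitMassOn H :=
  ⟨Finsupp.single_mem_supported ℂ 1 H.one_mem, by simp⟩

theorem smul_add_smul_mem_unitMassOn {H : Subgroup G} {c d : G →₀ ℂ} (hc : c ∈ unitMassOn H)
    (hd : d ∈ unitMassOn H) {s t : ℂ} (hst : s + t = 1) : s • c + t • d ∈ unitMassOn H :=
  ⟨add_mem (Submodule.smul_mem _ s hc.1) (Submodule.smul_mem _ t hd.1), by
    rw [map_add, map_smul, map_smul, hc.2, hd.2, smul_eq_mul, smul_eq_mul, mul_one, mul_one, hst]⟩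

theorem domCongr_mulLeft_mem_unitMassOn {H : Subgroup G} {h : G} (hh : h ∈ H) {c : G →₀ ℂ}
    (hc : c ∈ unitMassOn H) : Finsupp.domCongr (Equiv.mulLeft h) c ∈ unitMassOn H := by
  refine ⟨(Finsupp.mem_supported ℂ _).2 fun x hx => ?_, ?_⟩
  · rw [Finset.mem_coe, Finsupp.mem_support_iff, Finsupp.domCongr_apply,
      Finsupp.equivMapDomain_apply] at hx
    simpa using H.mul_mem hh ((Finsupp.mem_supported ℂ c).1 hc.1 (Finsupp.mem_support_iff.2 hx))
  · rw [Finsupp.domCongr_apply, Finsupp.linearCombination_equivMapDomain]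
    exact hc.2

theorem sum_sum_mul_apply_of_isDosetInvariant {H : Subgroup G} {f : G → ℂ}
    (hf : IsDosetInvariant H f) {c : G →₀ ℂ} (hc : c ∈ unitMassOn H) (g : G) :
    (c.sum fun x a => c.sum fun y b => conj a * b * f (x⁻¹ * (g * y))) = f g := by
  have hsupp := (Finsupp.mem_supported ℂ c).1 hc.1
  have hmass : c.sum (fun _ a => a) = 1 := by simpa [Finsupp.linearCombination_apply] using hc.2
  calc (c.sum fun x a => c.sum fun y b => conj a * b * f (x⁻¹ * (g * y)))
      = c.sum fun x a => c.sum fun y b => conj a * b * f g :=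
        Finsupp.sum_congr fun x hx => Finsupp.sum_congr fun y hy => by
          rw [← mul_assoc, hf g _ (inv_mem (hsupp hx)) _ (hsupp hy)]
    _ = conj (c.sum fun _ a => a) * c.sum (fun _ a => a) * f g := by
        simp only [map_finsuppSum, Finsupp.sum_mul, Finsupp.mul_sum]
        exact Finsupp.sum_comm _ _ _
    _ = f g := by rw [hmass, map_one, one_mul, one_mul]

end UnitMass

noncomputable section

/-- `G →₀ ℂ` with the GNS semi-inner product of `φ`: a separate type for each `φ`. -/
def PDSpace {G : Type} (_φ : G → ℂ) : Type := G →₀ ℂ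

namespace PDSpace

variable {G : Type} [Group G] (φ : G → ℂ)

instance : AddCommGroup (PDSpace φ) := inferInstanceAs (AddCommGroup (G →₀ ℂ))

instance : Module ℂ (PDSpace φ) := inferInstanceAs (Module ℂ (G →₀ ℂ))

def of : (G →₀ ℂ) ≃ₗ[ℂ] PDSpace φ := LinearEquiv.refl ℂ (G →₀ ℂ)

variable [hφ : Fact (IsPDFun φ)]

instance : PreInnerProductSpace.Core ℂ (PDSpace φ) where
  inner c d := ((of φ).symm c).sum fun x a => ((of φ).symm d).sum fun y b =>
    conj a * b * φ (x⁻¹ * y)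
  conj_inner_symm c d := by
    simp only [map_finsuppSum, map_mul, Complex.conj_conj]
    rw [Finsupp.sum_comm]
    refine Finsupp.sum_congr fun x _ => Finsupp.sum_congr fun y _ => ?_
    rw [← hφ.out.apply_inv, mul_inv_rev, inv_inv, mul_comm (conj _)]
  re_inner_nonneg c := (Complex.nonneg_iff.1 (hφ.out.finsupp_sum_nonneg _)).1
  add_left c c' d := by
    rw [map_add, Finsupp.sum_add_index'] <;> simp [add_mul, Finsupp.sum_add]
  smul_left c d r := by
    rw [map_smul, Finsupp.sum_smul_index'] <;> simp [Finsupp.mul_sum, mul_assoc]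

instance : SeminormedAddCommGroup (PDSpace φ) :=
  InnerProductSpace.Core.toSeminormedAddCommGroup (𝕜 := ℂ)

instance : InnerProductSpace ℂ (PDSpace φ) := .ofCore _

theorem inner_of (c d : G →₀ ℂ) :
    ⟪of φ c, of φ d⟫_ℂ = c.sum fun x a => d.sum fun y b => conj a * b * φ (x⁻¹ * y) := rfl

theorem inner_of_domCongr_mulLeft (g : G) (c d : G →₀ ℂ) :
    ⟪of φ (Finsupp.domCongr (Equiv.mulLeft g) c), of φ (Finsupp.domCongr (Equiv.mulLeft g) d)⟫_ℂ
      = ⟪of φ c, of φ d⟫_ℂ := by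
  simp only [inner_of, Finsupp.domCongr_apply, Finsupp.sum_equivMapDomain, Equiv.coe_mulLeft,
    mul_inv_rev, mul_assoc, inv_mul_cancel_left]

def translate : G →* (PDSpace φ ≃ₗᵢ[ℂ] PDSpace φ) where
  toFun g := ((of φ).symm ≪≫ₗ Finsupp.domLCongr (Equiv.mulLeft g) ≪≫ₗ of φ).isometryOfInner
    fun _ _ => inner_of_domCongr_mulLeft φ g _ _
  map_one' := LinearIsometryEquiv.ext fun v => (of φ).symm.injective <| Finsupp.ext fun x => by
    show (of φ).symm v (1⁻¹ * x) = (of φ).symm v x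
    rw [inv_one, one_mul]
  map_mul' g g' := LinearIsometryEquiv.ext fun v => (of φ).symm.injective <| Finsupp.ext fun x => by
    show (of φ).symm v ((g * g')⁻¹ * x) = (of φ).symm v (g'⁻¹ * (g⁻¹ * x))
    rw [mul_inv_rev, mul_assoc]

theorem translate_of (g : G) (c : G →₀ ℂ) :
    translate φ g (of φ c) = of φ (Finsupp.domCongr (Equiv.mulLeft g) c) := rfl

theorem inner_translate_of (g : G) (c : G →₀ ℂ) :
    ⟪of φ c, translate φ g (of φ c)⟫_ℂ
      = c.sum fun x a => c.sum fun y b => conj a * b * φ (x⁻¹ * (g * y)) := by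
  simp only [translate_of, inner_of, Finsupp.domCongr_apply, Finsupp.sum_equivMapDomain,
    Equiv.coe_mulLeft]

theorem continuous_inner_translate [TopologicalSpace G] [ContinuousMul G] (hφc : Continuous φ)
    (v : PDSpace φ) : Continuous fun g => ⟪v, translate φ g v⟫_ℂ := by
  obtain ⟨c, rfl⟩ := (of φ).surjective v
  simp only [inner_translate_of, Finsupp.sum]
  fun_prop

variable (ψ : G → ℂ) [Fact (IsPDFun ψ)]

instance : Fact (IsPDFun (φ + ψ)) := ⟨(Fact.out : IsPDFun φ).add Fact.out⟩

theorem norm_of_add_sq (c : G →₀ ℂ) :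
    ‖of (φ + ψ) c‖ ^ 2 = ‖of φ c‖ ^ 2 + ‖of ψ c‖ ^ 2 := by
  simp only [← inner_self_eq_norm_sq (𝕜 := ℂ), inner_of, Pi.add_apply, mul_add, Finsupp.sum_add]
  rfl

theorem norm_of_le_norm_of_add_left (c : G →₀ ℂ) : ‖of φ c‖ ≤ ‖of (φ + ψ) c‖ :=
  le_of_sq_le_sq (by nlinarith [norm_of_add_sq φ ψ c]) (norm_nonneg _)

theorem norm_of_le_norm_of_add_right (c : G →₀ ℂ) : ‖of ψ c‖ ≤ ‖of (φ + ψ) c‖ :=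
  le_of_sq_le_sq (by nlinarith [norm_of_add_sq φ ψ c]) (norm_nonneg _)

def IsAlmostInvariantCauchy (H : Subgroup G) (μ : ℕ → G →₀ ℂ) : Prop :=
  CauchySeq (fun n => of φ (μ n)) ∧
    ∀ h ∈ H, Tendsto (fun n => translate φ h (of φ (μ n)) - of φ (μ n)) atTop (𝓝 0)

variable {φ ψ} {H : Subgroup G} {μ : ℕ → G →₀ ℂ}

theorem IsAlmostInvariantCauchy.of_norm_le (hle : ∀ c, ‖of φ c‖ ≤ ‖of ψ c‖)
    (hμ : IsAlmostInvariantCauchy ψ H μ) : IsAlmostInvariantCauchy φ H μ := by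
  let T : PDSpace ψ →L[ℂ] PDSpace φ :=
    (of φ ∘ₗ (of ψ).symm.toLinearMap).mkContinuous 1 fun v => by simpa using hle ((of ψ).symm v)
  exact ⟨T.uniformContinuous.comp_cauchySeq hμ.1,
    fun h hh => (T.continuous.tendsto' 0 0 (map_zero T)).comp (hμ.2 h hh)⟩

variable (φ) in
theorem exists_isAlmostInvariantCauchy (H : Subgroup G) :
    ∃ μ : ℕ → G →₀ ℂ, (∀ n, μ n ∈ unitMassOn H) ∧ IsAlmostInvariantCauchy φ H μ := by
  -- convexity needs the real structure, and `complexToReal` is not an instance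
  let _ : InnerProductSpace ℝ (PDSpace φ) := InnerProductSpace.complexToReal
  have hK : Convex ℝ ((of φ).symm ⁻¹' unitMassOn H) := fun x hx y hy a b _ _ hab => by
    rw [mem_preimage, RCLike.real_smul_eq_coe_smul (K := ℂ) a x,
      RCLike.real_smul_eq_coe_smul (K := ℂ) b y, map_add, map_smul, map_smul]
    exact smul_add_smul_mem_unitMassOn hx hy (by rw [← RCLike.ofReal_add, hab, RCLike.ofReal_one])
  obtain ⟨v, hvK, hv, hinv⟩ :=
    exists_cauchySeq_minimizing hK ⟨of φ (.single 1 1), single_one_mem_unitMassOn H⟩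
  refine ⟨fun n => (of φ).symm (v n), hvK, ?_, fun h hh => ?_⟩
  · simpa using hv
  · simpa using hinv (translate φ h) (LinearIsometryEquiv.norm_map _)
      fun w hw => domCongr_mulLeft_mem_unitMassOn hh hw

theorem IsAlmostInvariantCauchy.exists_limit [TopologicalSpace G] [ContinuousMul G]
    (hφc : Continuous φ) (hμ : IsAlmostInvariantCauchy φ H μ) :
    ∃ F : G → ℂ, Continuous F ∧ IsPDFun F ∧ IsDosetInvariant H F ∧
      ∀ g, Tendsto (fun n => ⟪of φ (μ n), translate φ g (of φ (μ n))⟫_ℂ) atTop (𝓝 (F g)) := by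
  obtain ⟨F, hF⟩ := exists_tendstoUniformly_inner_apply (translate φ) hμ.1
  have hlim := hF.tendsto_at
  exact ⟨F, hF.continuous (Frequently.of_forall fun n => continuous_inner_translate φ hφc _),
    IsPDFun.of_tendsto (fun n => isPDFun_inner_apply _ _) hlim,
    isDosetInvariant_of_tendsto_inner_apply _ hμ.1 hμ.2 hlim, hlim⟩

theorem inner_translate_sub_inner_translate {f : G → ℂ} (hf : IsDosetInvariant H f)
    (hfφψ : ∀ g, f g = φ g - ψ g) {c : G →₀ ℂ} (hc : c ∈ unitMassOn H) (g : G) :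
    ⟪of φ c, translate φ g (of φ c)⟫_ℂ - ⟪of ψ c, translate ψ g (of ψ c)⟫_ℂ = f g := by
  simp only [inner_translate_of, ← Finsupp.sum_sub, ← mul_sub, ← hfφψ]
  exact sum_sum_mul_apply_of_isDosetInvariant hf hc g

end PDSpace

end

theorem real_fourier_stieltjes_inter_doset_invariant_general
    {G : Type} [Group G] [TopologicalSpace G] [IsTopologicalGroup G]
    (H : Subgroup G)
    (f : G → ℂ) (hfinv : IsDosetInvariant H f) :
    (∃ fp fm : G → ℂ,
      Continuous fp ∧ IsPDFun fp ∧ Continuous fm ∧ IsPDFun fm ∧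
      ∀ g, f g = fp g - fm g) ↔
    (∃ fp fm : G → ℂ,
      Continuous fp ∧ IsPDFun fp ∧ IsDosetInvariant H fp ∧
      Continuous fm ∧ IsPDFun fm ∧ IsDosetInvariant H fm ∧
      ∀ g, f g = fp g - fm g) := by
  refine ⟨fun ⟨fp, fm, hfpc, hfp, hfmc, hfm, hf⟩ => ?_,
    fun ⟨fp, fm, hfpc, hfp, _, hfmc, hfm, _, hf⟩ => ⟨fp, fm, hfpc, hfp, hfmc, hfm, hf⟩⟩
  have := Fact.mk hfp
  have := Fact.mk hfm
  obtain ⟨μ, hμH, hμ⟩ := PDSpace.exists_isAlmostInvariantCauchy (fp + fm) H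
  obtain ⟨Fp, hFpc, hFp, hFpH, hFp_lim⟩ :=
    (hμ.of_norm_le (PDSpace.norm_of_le_norm_of_add_left fp fm)).exists_limit hfpc
  obtain ⟨Fm, hFmc, hFm, hFmH, hFm_lim⟩ :=
    (hμ.of_norm_le (PDSpace.norm_of_le_norm_of_add_right fp fm)).exists_limit hfmc
  refine ⟨Fp, Fm, hFpc, hFp, hFpH, hFmc, hFm, hFmH, fun g => ?_⟩
  refine tendsto_nhds_unique ?_ ((hFp_lim g).sub (hFm_lim g))
  simpa only [PDSpace.inner_translate_sub_inner_translate hfinv hf (hμH _)] using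
    tendsto_const_nhds

/-- `B_ℝ(G) ∩ C_ℂ(H\G/H) = B_ℝ(H\G/H)`: a continuous
double-coset-invariant function on `G` admits a continuous positive decomposition
iff it admits one into double-coset-invariant functions. -/
theorem real_fourier_stieltjes_inter_doset_invariant
    {G : Type} [Group G] [TopologicalSpace G] [IsTopologicalGroup G]
    [LocallyCompactSpace G] [T2Space G]
    (H : Subgroup G) (hH : IsClosed (H : Set G))
    (f : G → ℂ) (hfc : Continuous f) (hfinv : IsDosetInvariant H f) :
    (∃ fp fm : G → ℂ,
      Continuous fp ∧ IsPDFun fp ∧ Continuous fm ∧ IsPDFun fm ∧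
      ∀ g, f g = fp g - fm g) ↔
    (∃ fp fm : G → ℂ,
      Continuous fp ∧ IsPDFun fp ∧ IsDosetInvariant H fp ∧
      Continuous fm ∧ IsPDFun fm ∧ IsDosetInvariant H fm ∧
      ∀ g, f g = fp g - fm g) :=
  real_fourier_stieltjes_inter_doset_invariant_general H f hfinv
end

section
/- Let G be a locally compact Hausdorff topological group. A function f : G → ℂ is a continuous positive definite function if and only if there exist a complex Hilbert space V, a strongly continuous unitary representation π : G → U(V), and a vector v ∈ V such that f(g) = ⟨π(g)v, v⟩ for all g ∈ G. -/
/-!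
GNS construction. A positive definite `f` defines the pre-inner product
`⟪δ_g, δ_h⟫ = f (h⁻¹ * g)` on the finitely supported functions `G →₀ ℂ`; left translation
preserves it, so it extends to a unitary representation `π` on the Hilbert-space completion, and
`f g = ⟪π g δ₁, δ₁⟫`. Strong continuity comes from `‖π g v - v‖² = 2‖v‖² - 2 re ⟪π g v, v⟫`:
continuity of `f` makes the orbits of point masses continuous, hence those of all finitely
supported vectors, and since every `π g` is an isometry this passes to the completion by density.
Conversely, `∑ᵢⱼ conj cᵢ cⱼ ⟪π (gᵢ⁻¹ gⱼ) v, v⟫ = ‖∑ᵢ conj cᵢ • π gᵢ v‖² ≥ 0`.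
-/

open scoped ComplexOrder InnerProductSpace

open ComplexConjugate UniformSpace Filter Topology

namespace IsPDFun

variable {G : Type} [Group G] {f : G → ℂ}

theorem one_nonneg (hf : IsPDFun f) : 0 ≤ f 1 := by
  simpa using hf 1 (fun _ => 1) (fun _ => 1)

theorem map_inv (hf : IsPDFun f) (a : G) : f a⁻¹ = conj (f a) := by
  -- the sums for `g = (1, a)` and `c = (1, 1)`, `c = (1, i)` have vanishing imaginary parts
  have h1 := (Complex.le_def.1 (hf 2 ![1, a] ![1, 1])).2
  have hI := (Complex.le_def.1 (hf 2 ![1, a] ![1, Complex.I])).2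
  have h0 := (Complex.le_def.1 hf.one_nonneg).2
  simp [Fin.sum_univ_two] at h1 hI h0
  apply Complex.ext <;> simp <;> linarith

theorem sum_nonneg_s10 (hf : IsPDFun f) (s : Finset G) (c : G → ℂ) :
    0 ≤ ∑ g ∈ s, ∑ h ∈ s, conj (c g) * c h * f (g⁻¹ * h) := by
  simp_rw [← Finset.sum_coe_sort s, ← s.equivFin.symm.sum_comp]
  exact hf s.card (fun i => s.equivFin.symm i) (fun i => c (s.equivFin.symm i))

end IsPDFun

theorem LinearIsometryEquiv.apply_apply_inv_mul {R G E : Type*} [Semiring R] [Group G]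
    [SeminormedAddCommGroup E] [Module R E] (π : G →* (E ≃ₗᵢ[R] E)) (a b : G) (v : E) :
    π a (π (a⁻¹ * b) v) = π b v := by
  rw [← Function.comp_apply (f := π a), ← LinearIsometryEquiv.coe_mul, ← map_mul,
    mul_inv_cancel_left]

theorem isPDFun_inner_apply_s10 {G V : Type} [Group G] [SeminormedAddCommGroup V]
    [InnerProductSpace ℂ V] (π : G →* (V ≃ₗᵢ[ℂ] V)) (v : V) :
    IsPDFun fun g => ⟪π g v, v⟫_ℂ := by
  intro N g c
  let y := ∑ i, conj (c i) • π (g i) v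
  have hsum : ∑ i, ∑ j, conj (c i) * c j * ⟪π ((g i)⁻¹ * g j) v, v⟫_ℂ = ⟪y, y⟫_ℂ := by
    rw [sum_inner, Finset.sum_comm]
    refine Finset.sum_congr rfl fun i _ => ?_
    rw [inner_sum]
    refine Finset.sum_congr rfl fun j _ => ?_
    rw [inner_smul_left, inner_smul_right, ← (π (g j)).inner_map_map,
      LinearIsometryEquiv.apply_apply_inv_mul, Complex.conj_conj]
    ring
  rw [hsum, inner_self_eq_norm_sq_to_K]
  exact pow_nonneg (Complex.zero_le_real.2 (norm_nonneg y)) 2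

theorem continuous_apply_of_dense_of_lipschitzWith {X Y Z : Type*} [TopologicalSpace X]
    [PseudoEMetricSpace Y] [PseudoEMetricSpace Z] {T : X → Y → Z} {K : NNReal}
    (hT : ∀ a, LipschitzWith K (T a)) {s : Set Y} (hs : Dense s)
    (h : ∀ y ∈ s, Continuous fun a => T a y) (y : Y) : Continuous fun a => T a y := by
  refine continuous_iff_continuousAt.2 fun a => ?_
  have hclosed := (LipschitzWith.uniformEquicontinuous T K hT).equicontinuous
    |>.isClosed_setOfPred_tendsto (l := 𝓝 a) (hT a).continuous
  have hsub : s ⊆ {y | Tendsto (T · y) (𝓝 a) (𝓝 (T a y))} := fun y hy => (h y hy).continuousAt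
  exact closure_minimal hsub hclosed (hs.closure_eq ▸ Set.mem_univ y)

theorem continuous_apply_of_continuous_inner {𝕜 G E : Type*} [RCLike 𝕜] [Group G]
    [TopologicalSpace G] [ContinuousMul G] [SeminormedAddCommGroup E] [InnerProductSpace 𝕜 E]
    (π : G →* (E ≃ₗᵢ[𝕜] E)) (v : E) (h : Continuous fun g => ⟪π g v, v⟫_𝕜) :
    Continuous fun g => π g v := by
  have hsq : ∀ g, ‖π g v - v‖ = √(2 * ‖v‖ ^ 2 - 2 * RCLike.re ⟪π g v, v⟫_𝕜) := fun g => by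
    rw [← Real.sqrt_sq (norm_nonneg _), norm_sub_sq (𝕜 := 𝕜), LinearIsometryEquiv.norm_map]
    ring_nf
  have hdist : ∀ b c, ‖π b v - π c v‖ = ‖π (c⁻¹ * b) v - v‖ := fun b c => by
    rw [← (π c).norm_map (π (c⁻¹ * b) v - v), map_sub, LinearIsometryEquiv.apply_apply_inv_mul]
  refine continuous_iff_continuousAt.2 fun c => tendsto_iff_norm_sub_tendsto_zero.2 ?_
  have hcont : Continuous fun b => ‖π (c⁻¹ * b) v - v‖ := by
    have hc : Continuous fun b => ⟪π (c⁻¹ * b) v, v⟫_𝕜 := h.comp (continuous_const_mul c⁻¹)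
    simp_rw [hsq]
    fun_prop
  simpa [hdist] using hcont.tendsto c

namespace LinearIsometryEquiv

variable {𝕜 E F : Type*} [NormedField 𝕜] [SeminormedAddCommGroup E] [NormedSpace 𝕜 E]
  [SeminormedAddCommGroup F] [NormedSpace 𝕜 F]

noncomputable def completion (e : E ≃ₗᵢ[𝕜] F) : Completion E ≃ₗᵢ[𝕜] Completion F where
  toLinearMap := (e : E →L[𝕜] F).completion
  invFun := Completion.map e.symm
  left_inv x := by
    induction x using Completion.induction_on with
    | hp =>
      exact isClosed_eq (Completion.continuous_map.comp Completion.continuous_map) continuous_id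
    | ih x => simp [Completion.map_coe e.symm.isometry.uniformContinuous]
  right_inv x := by
    induction x using Completion.induction_on with
    | hp =>
      exact isClosed_eq (Completion.continuous_map.comp Completion.continuous_map) continuous_id
    | ih x => simp [Completion.map_coe e.symm.isometry.uniformContinuous]
  norm_map' x := by
    induction x using Completion.induction_on with
    | hp => exact isClosed_eq (continuous_norm.comp Completion.continuous_map) continuous_norm
    | ih x => simp

@[simp]
theorem completion_coe (e : E ≃ₗᵢ[𝕜] F) (x : E) : e.completion x = e x := by
  simp [completion]

theorem ext_completion {e e' : Completion E ≃ₗᵢ[𝕜] Completion F} (h : ∀ x : E, e x = e' x) :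
    e = e' :=
  DFunLike.coe_injective (Completion.ext e.continuous e'.continuous h)

noncomputable def completionHom : (E ≃ₗᵢ[𝕜] E) →* (Completion E ≃ₗᵢ[𝕜] Completion E) where
  toFun := completion
  map_one' := ext_completion fun x => by simp
  map_mul' e e' := ext_completion fun x => by simp

@[simp]
theorem completionHom_apply (e : E ≃ₗᵢ[𝕜] E) : completionHom e = e.completion := rfl

theorem continuous_completion_apply {X : Type*} [TopologicalSpace X] {T : X → E ≃ₗᵢ[𝕜] E}
    (hT : ∀ x : E, Continuous fun a => T a x) (w : Completion E) :
    Continuous fun a => (T a).completion w := by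
  refine continuous_apply_of_dense_of_lipschitzWith (fun a => (T a).completion.lipschitz)
    (Completion.denseRange_coe (α := E)) ?_ w
  rintro _ ⟨x, rfl⟩
  simp only [completion_coe]
  exact (Completion.continuous_coe E).comp (hT x)

end LinearIsometryEquiv

section GNS

variable {G : Type} [Group G] (f : G → ℂ)

noncomputable def gnsInner (x y : G →₀ ℂ) : ℂ :=
  x.sum fun g a => y.sum fun h b => conj a * b * f (h⁻¹ * g)

theorem gnsInner_single (u w : G) (a b : ℂ) :
    gnsInner f (Finsupp.single u a) (Finsupp.single w b) = conj a * b * f (w⁻¹ * u) := by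
  simp [gnsInner]

theorem gnsInner_add_left (x x' y : G →₀ ℂ) :
    gnsInner f (x + x') y = gnsInner f x y + gnsInner f x' y := by
  unfold gnsInner
  rw [Finsupp.sum_add_index' (by simp) fun g a a' => ?_]
  simp only [← Finsupp.sum_add, map_add, add_mul]

theorem gnsInner_smul_left (r : ℂ) (x y : G →₀ ℂ) :
    gnsInner f (r • x) y = conj r * gnsInner f x y := by
  unfold gnsInner
  rw [Finsupp.sum_smul_index' (by simp), Finsupp.mul_sum]
  simp only [Finsupp.mul_sum, smul_eq_mul, map_mul, mul_assoc]

theorem gnsInner_equivMapDomain_mulLeft (g : G) (x y : G →₀ ℂ) :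
    gnsInner f (x.equivMapDomain (Equiv.mulLeft g)) (y.equivMapDomain (Equiv.mulLeft g)) =
      gnsInner f x y := by
  simp [gnsInner, mul_assoc]

variable {f}

theorem gnsInner_conj_symm (hf : IsPDFun f) (x y : G →₀ ℂ) :
    conj (gnsInner f y x) = gnsInner f x y := by
  unfold gnsInner Finsupp.sum
  simp only [map_sum, map_mul, Complex.conj_conj, ← hf.map_inv, mul_inv_rev, inv_inv]
  rw [Finset.sum_comm]
  simp only [mul_comm]

theorem gnsInner_self_nonneg (hf : IsPDFun f) (x : G →₀ ℂ) : 0 ≤ gnsInner f x x := by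
  have h := hf.sum_nonneg_s10 x.support (conj ∘ x)
  rw [Finset.sum_comm] at h
  simpa [gnsInner, Finsupp.sum, mul_comm] using h

end GNS

-- `f` only selects the pre-inner product that the instances below put on `G →₀ ℂ`.
def GNSSpace {G : Type} [Group G] (_ : G → ℂ) : Type := G →₀ ℂ

namespace GNSSpace

variable {G : Type} [Group G] (f : G → ℂ)

noncomputable instance : AddCommGroup (GNSSpace f) := inferInstanceAs (AddCommGroup (G →₀ ℂ))

noncomputable instance : Module ℂ (GNSSpace f) := inferInstanceAs (Module ℂ (G →₀ ℂ))

noncomputable def single (u : G) (a : ℂ) : GNSSpace f := Finsupp.single u a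

variable {f} in
@[reducible]
noncomputable def core (hf : IsPDFun f) : PreInnerProductSpace.Core ℂ (GNSSpace f) where
  inner := gnsInner f
  conj_inner_symm := gnsInner_conj_symm hf
  re_inner_nonneg x := (Complex.le_def.1 (gnsInner_self_nonneg hf x)).1
  add_left := gnsInner_add_left f
  smul_left x y r := gnsInner_smul_left f r x y

variable [hf : Fact (IsPDFun f)]

noncomputable instance : SeminormedAddCommGroup (GNSSpace f) :=
  @InnerProductSpace.Core.toSeminormedAddCommGroup ℂ (GNSSpace f) _ _ _ (core hf.out)

noncomputable instance : InnerProductSpace ℂ (GNSSpace f) :=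
  InnerProductSpace.ofCore (core hf.out)

theorem inner_single (u w : G) (a b : ℂ) :
    ⟪single f u a, single f w b⟫_ℂ = conj a * b * f (w⁻¹ * u) :=
  gnsInner_single f u w a b

noncomputable def leftRegular : G →* (GNSSpace f ≃ₗᵢ[ℂ] GNSSpace f) where
  toFun g := LinearEquiv.isometryOfInner
    (Finsupp.domLCongr (M := ℂ) (R := ℂ) (Equiv.mulLeft g) : GNSSpace f ≃ₗ[ℂ] GNSSpace f)
    (gnsInner_equivMapDomain_mulLeft f g)
  map_one' := LinearIsometryEquiv.ext fun (x : G →₀ ℂ) => Finsupp.ext fun u => by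
    change Finsupp.equivMapDomain (Equiv.mulLeft 1) x u = x u
    simp [-Equiv.mulLeft_one]
  map_mul' g h := LinearIsometryEquiv.ext fun (x : G →₀ ℂ) => Finsupp.ext fun u => by
    change Finsupp.equivMapDomain (Equiv.mulLeft (g * h)) x u =
      Finsupp.equivMapDomain (Equiv.mulLeft g) (Finsupp.equivMapDomain (Equiv.mulLeft h) x) u
    simp [mul_assoc, -Equiv.mulLeft_mul]

theorem leftRegular_single (g u : G) (a : ℂ) :
    leftRegular f g (single f u a) = single f (g * u) a := by
  change Finsupp.equivMapDomain _ (Finsupp.single u a) = Finsupp.single (g * u) a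
  simp

variable {f} in
theorem continuous_leftRegular_apply [TopologicalSpace G] [ContinuousMul G] (hc : Continuous f)
    (x : GNSSpace f) :
    Continuous fun g => leftRegular f g x := by
  induction x using Finsupp.induction_linear with
  | zero => exact continuous_const.congr fun g => (map_zero (leftRegular f g)).symm
  | add x y hx hy => exact (hx.add hy).congr fun g => (map_add (leftRegular f g) x y).symm
  | single u a =>
    refine continuous_apply_of_continuous_inner (leftRegular f) (single f u a) ?_
    simp_rw [leftRegular_single, inner_single]
    fun_prop

end GNSSpace

theorem continuous_pd_iff_diagonal_matrix_coefficient_general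
    {G : Type} [Group G] [TopologicalSpace G] [IsTopologicalGroup G]
    (f : G → ℂ) :
    (Continuous f ∧ IsPDFun f) ↔
    ∃ (V : Type) (_ : NormedAddCommGroup V) (_ : InnerProductSpace ℂ V)
      (_ : CompleteSpace V) (π : G →* (V ≃ₗᵢ[ℂ] V)) (v : V),
      (∀ w : V, Continuous fun g => π g w) ∧
      ∀ g : G, f g = ⟪π g v, v⟫_ℂ := by
  constructor
  · rintro ⟨hc, hf⟩
    have : Fact (IsPDFun f) := ⟨hf⟩
    refine ⟨Completion (GNSSpace f), inferInstance, inferInstance, inferInstance,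
      LinearIsometryEquiv.completionHom.comp (GNSSpace.leftRegular f), GNSSpace.single f 1 1,
      LinearIsometryEquiv.continuous_completion_apply (GNSSpace.continuous_leftRegular_apply hc),
      fun g => ?_⟩
    simp [GNSSpace.leftRegular_single, GNSSpace.inner_single]
  · rintro ⟨V, _, _, _, π, v, hπ, hfπ⟩
    obtain rfl : f = fun g => ⟪π g v, v⟫_ℂ := funext hfπ
    exact ⟨(hπ v).inner continuous_const, isPDFun_inner_apply_s10 π v⟩

/-- a function on a locally compact group is continuous and positive
definite iff it is a diagonal matrix coefficient `g ↦ ⟪π(g)v, v⟫` of a strongly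
continuous unitary representation. -/
theorem continuous_pd_iff_diagonal_matrix_coefficient
    {G : Type} [Group G] [TopologicalSpace G] [IsTopologicalGroup G]
    [LocallyCompactSpace G] [T2Space G] (f : G → ℂ) :
    (Continuous f ∧ IsPDFun f) ↔
    ∃ (V : Type) (_ : NormedAddCommGroup V) (_ : InnerProductSpace ℂ V)
      (_ : CompleteSpace V) (π : G →* (V ≃ₗᵢ[ℂ] V)) (v : V),
      (∀ w : V, Continuous fun g => π g w) ∧
      ∀ g : G, f g = ⟪π g v, v⟫_ℂ :=
  continuous_pd_iff_diagonal_matrix_coefficient_general f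
end

section
/- Let G be a locally compact Hausdorff topological group, H a closed subgroup, π : G → U(V) a strongly continuous unitary representation on a complex Hilbert space V, and v, w ∈ V. Let W = {u ∈ V : π(h)u = u for all h ∈ H} and let p : V → W be the orthogonal projection onto the closed subspace W. Define f : G → ℂ by f(g) = ⟨π(g)v, w⟩. Then f is invariant on double cosets, i.e. f(hgh') = f(g) for all g ∈ G and h, h' ∈ H, if and only if f(g) = ⟨π(g)p(v), p(w)⟩ for all g ∈ G. -/
/-!
Let `P` be the projection onto the `H`-fixed vectors and `D x` the closed span of the
displacements `π h x - x`, `h ∈ H`. Then `x - P x ∈ D x`: the component of `x` orthogonal to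
`D x` is `H`-fixed, because `D x`, hence also `(D x)ᗮ`, is `H`-invariant, while `D x` is
orthogonal to every fixed vector. Hence a functional `⟪·, w⟫` that is constant on the `H`-orbit
of `x` takes the same value at `x` and at `P x`. Applied to right invariance (at `v`, against
`π g⁻¹ w`) and to left invariance (via self-adjointness of `P`), this turns `⟪π g v, w⟫` into
`⟪π g (P v), P w⟫`; conversely `P v` and `P w` are fixed, so the latter is bi-invariant.
-/

open scoped InnerProductSpace

namespace UnitaryRepresentation

variable {𝕜 : Type*} [RCLike 𝕜] {G : Type*} [Group G]
  {V : Type*} [NormedAddCommGroup V] [InnerProductSpace 𝕜 V]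
  (π : G →* (V ≃ₗᵢ[𝕜] V)) (H : Subgroup G)

theorem map_mul_apply (a b : G) (u : V) : π (a * b) u = π a (π b u) := by
  rw [map_mul, LinearIsometryEquiv.coe_mul, Function.comp_apply]

theorem map_inv_apply (g : G) (u : V) : π g⁻¹ u = (π g).symm u := by
  rw [map_inv, LinearIsometryEquiv.coe_inv]

def fixedSubspace : Submodule 𝕜 V where
  carrier := {u | ∀ h ∈ H, π h u = u}
  zero_mem' _ _ := map_zero _
  add_mem' hu hv h hh := by rw [map_add, hu h hh, hv h hh]
  smul_mem' c _ hu h hh := by rw [map_smul, hu h hh]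

theorem isClosed_fixedSubspace : IsClosed (fixedSubspace π H : Set V) := by
  simp only [fixedSubspace, Submodule.coe_set_mk, AddSubmonoid.coe_set_mk,
    AddSubsemigroup.coe_set_mk, Set.ofPred_forall]
  exact isClosed_biInter fun h _ => isClosed_eq (π h).continuous continuous_id

instance [CompleteSpace V] : (fixedSubspace π H).HasOrthogonalProjection :=
  have := (isClosed_fixedSubspace π H).completeSpace_coe
  inferInstance

variable {π H}

theorem map_starProjection_fixedSubspace [CompleteSpace V] {h : G} (hh : h ∈ H) (u : V) :
    π h ((fixedSubspace π H).starProjection u) = (fixedSubspace π H).starProjection u :=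
  (fixedSubspace π H).starProjection_apply_mem u h hh

theorem map_sub_self_mem_orthogonal_fixedSubspace {h : G} (hh : h ∈ H) (y : V) :
    π h y - y ∈ (fixedSubspace π H)ᗮ := fun u hu => by
  rw [inner_sub_right, ← hu h hh, LinearIsometryEquiv.inner_map_map, hu h hh, sub_self]

variable (π H) in
def displacementSubspace (x : V) : Submodule 𝕜 V :=
  (Submodule.span 𝕜 ((fun h => π h x - x) '' H)).topologicalClosure

variable (π H) in
theorem isClosed_displacementSubspace (x : V) :
    IsClosed (displacementSubspace π H x : Set V) :=
  Submodule.isClosed_topologicalClosure _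

theorem map_sub_self_mem_displacementSubspace {h : G} (hh : h ∈ H) (x : V) :
    π h x - x ∈ displacementSubspace π H x :=
  Submodule.le_topologicalClosure _ (Submodule.subset_span ⟨h, hh, rfl⟩)

theorem displacementSubspace_le {x : V} {K : Submodule 𝕜 V} (hK : IsClosed (K : Set V))
    (hx : ∀ h ∈ H, π h x - x ∈ K) : displacementSubspace π H x ≤ K :=
  Submodule.topologicalClosure_minimal _
    (Submodule.span_le.mpr <| Set.image_subset_iff.mpr hx) hK

theorem map_mem_displacementSubspace {k : G} (hk : k ∈ H) {x y : V}
    (hy : y ∈ displacementSubspace π H x) : π k y ∈ displacementSubspace π H x := by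
  let D := displacementSubspace π H x
  refine displacementSubspace_le (K := D.comap (π k).toLinearEquiv.toLinearMap)
    ((isClosed_displacementSubspace π H x).preimage (π k).continuous) (fun h hh => ?_) hy
  show π k (π h x - x) ∈ D
  have hsplit : π k (π h x - x) = (π (k * h) x - x) - (π k x - x) := by
    rw [map_mul_apply, map_sub]; abel
  rw [hsplit]
  exact D.sub_mem (map_sub_self_mem_displacementSubspace (H.mul_mem hk hh) x)
    (map_sub_self_mem_displacementSubspace hk x)

theorem map_mem_orthogonal_displacementSubspace {k : G} (hk : k ∈ H) {x y : V}
    (hy : y ∈ (displacementSubspace π H x)ᗮ) : π k y ∈ (displacementSubspace π H x)ᗮ :=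
  fun m hm => by
    rw [← inner_conj_symm, LinearIsometryEquiv.inner_map_eq_flip, ← map_inv_apply,
      inner_eq_zero_symm.mp (hy _ (map_mem_displacementSubspace (H.inv_mem hk) hm)), map_zero]

variable [CompleteSpace V]

instance (x : V) : (displacementSubspace π H x).HasOrthogonalProjection :=
  have := (isClosed_displacementSubspace π H x).completeSpace_coe
  inferInstance

theorem sub_starProjection_displacementSubspace_mem_fixedSubspace (x : V) :
    x - (displacementSubspace π H x).starProjection x ∈ fixedSubspace π H := by
  set D := displacementSubspace π H x
  set n := x - D.starProjection x
  have hn : n ∈ Dᗮ := D.sub_starProjection_mem_orthogonal x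
  intro k hk
  have hD : π k n - n ∈ D := by
    have hsplit : π k n - n = (π k x - x) - (π k (D.starProjection x) - D.starProjection x) := by
      simp only [n, map_sub]; abel
    rw [hsplit]
    exact D.sub_mem (map_sub_self_mem_displacementSubspace hk x)
      (D.sub_mem (map_mem_displacementSubspace hk (D.starProjection_apply_mem x))
        (D.starProjection_apply_mem x))
  have hDperp : π k n - n ∈ Dᗮ := Dᗮ.sub_mem (map_mem_orthogonal_displacementSubspace hk hn) hn
  exact sub_eq_zero.mp (D.inf_orthogonal_eq_bot.le ⟨hD, hDperp⟩)

theorem sub_starProjection_fixedSubspace_mem_displacementSubspace (x : V) :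
    x - (fixedSubspace π H).starProjection x ∈ displacementSubspace π H x := by
  set D := displacementSubspace π H x
  have hDW : D ≤ (fixedSubspace π H)ᗮ := displacementSubspace_le
    (Submodule.isClosed_orthogonal _) fun h hh => map_sub_self_mem_orthogonal_fixedSubspace hh x
  have hP : (fixedSubspace π H).starProjection x = x - D.starProjection x :=
    Submodule.eq_starProjection_of_mem_orthogonal
      (sub_starProjection_displacementSubspace_mem_fixedSubspace x)
      (by rw [sub_sub_cancel]; exact hDW (D.starProjection_apply_mem x))
  rw [hP, sub_sub_cancel]
  exact D.starProjection_apply_mem x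

theorem inner_starProjection_fixedSubspace_eq {x w : V}
    (hx : ∀ h ∈ H, ⟪π h x, w⟫_𝕜 = ⟪x, w⟫_𝕜) :
    ⟪(fixedSubspace π H).starProjection x, w⟫_𝕜 = ⟪x, w⟫_𝕜 := by
  have hD : displacementSubspace π H x ≤ (𝕜 ∙ w)ᗮ :=
    displacementSubspace_le (Submodule.isClosed_orthogonal _) fun h hh => by
      rw [Submodule.mem_orthogonal_singleton_iff_inner_left, inner_sub_left, hx h hh, sub_self]
  have := Submodule.mem_orthogonal_singleton_iff_inner_left.mp
    (hD (sub_starProjection_fixedSubspace_mem_displacementSubspace x))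
  rwa [inner_sub_left, sub_eq_zero, eq_comm] at this

theorem inner_map_starProjection_fixedSubspace_left {v w : V}
    (hv : ∀ g, ∀ h ∈ H, ⟪π (g * h) v, w⟫_𝕜 = ⟪π g v, w⟫_𝕜) (g : G) :
    ⟪π g ((fixedSubspace π H).starProjection v), w⟫_𝕜 = ⟪π g v, w⟫_𝕜 := by
  simp only [LinearIsometryEquiv.inner_map_eq_flip]
  exact inner_starProjection_fixedSubspace_eq fun h hh => by
    rw [← LinearIsometryEquiv.inner_map_eq_flip, ← LinearIsometryEquiv.inner_map_eq_flip,
      ← map_mul_apply, hv g h hh]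

theorem inner_map_starProjection_fixedSubspace_right {v w : V}
    (hw : ∀ g, ∀ h ∈ H, ⟪π (h * g) v, w⟫_𝕜 = ⟪π g v, w⟫_𝕜) (g : G) :
    ⟪π g v, (fixedSubspace π H).starProjection w⟫_𝕜 = ⟪π g v, w⟫_𝕜 := by
  rw [← Submodule.inner_starProjection_left_eq_right]
  exact inner_starProjection_fixedSubspace_eq fun h hh => by rw [← map_mul_apply, hw g h hh]

end UnitaryRepresentation

open UnitaryRepresentation

theorem matrix_coefficient_doset_invariant_iff_projection_general
    {G : Type} [Group G]
    (H : Subgroup G)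
    {V : Type} [NormedAddCommGroup V] [InnerProductSpace ℂ V] [CompleteSpace V]
    (π : G →* (V ≃ₗᵢ[ℂ] V))
    (W : Submodule ℂ V) (hW : ∀ u : V, u ∈ W ↔ ∀ h ∈ H, π h u = u)
    (p : V → V) (hp : ∀ u : V, p u ∈ W ∧ u - p u ∈ Wᗮ)
    (v w : V) (f : G → ℂ) (hf : ∀ g : G, f g = ⟪π g v, w⟫_ℂ) :
    (∀ (g : G), ∀ h ∈ H, ∀ h' ∈ H, f (h * g * h') = f g) ↔
    ∀ g : G, f g = ⟪π g (p v), p w⟫_ℂ := by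
  obtain rfl : W = fixedSubspace π H := Submodule.ext hW
  obtain rfl : p = (fixedSubspace π H).starProjection := funext fun u =>
    (Submodule.eq_starProjection_of_mem_orthogonal (hp u).1 (hp u).2).symm
  simp only [hf]
  constructor
  · intro hinv g
    have hright : ∀ g, ∀ h ∈ H, ⟪π (g * h) v, w⟫_ℂ = ⟪π g v, w⟫_ℂ := fun g h hh => by
      simpa using hinv g 1 H.one_mem h hh
    have hleft : ∀ g, ∀ h ∈ H, ⟪π (h * g) ((fixedSubspace π H).starProjection v), w⟫_ℂ =
        ⟪π g ((fixedSubspace π H).starProjection v), w⟫_ℂ := fun g h hh => by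
      rw [inner_map_starProjection_fixedSubspace_left hright,
        inner_map_starProjection_fixedSubspace_left hright]
      simpa using hinv g h hh 1 H.one_mem
    rw [inner_map_starProjection_fixedSubspace_right hleft,
      inner_map_starProjection_fixedSubspace_left hright]
  · intro hP g h hh h' hh'
    rw [hP, hP, map_mul_apply, map_mul_apply, map_starProjection_fixedSubspace hh',
      LinearIsometryEquiv.inner_map_eq_flip, ← map_inv_apply,
      map_starProjection_fixedSubspace (H.inv_mem hh)]

/-- a matrix coefficient `f(g) = ⟪π(g)v, w⟫` of a strongly continuous
unitary representation is invariant on double cosets of `H` iff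
`f(g) = ⟪π(g)p(v), p(w)⟫`, where `p` is the orthogonal projection onto the subspace
`W = {u : π(h)u = u ∀ h ∈ H}` of `H`-fixed vectors. -/
theorem matrix_coefficient_doset_invariant_iff_projection
    {G : Type} [Group G] [TopologicalSpace G] [IsTopologicalGroup G]
    [LocallyCompactSpace G] [T2Space G]
    (H : Subgroup G) (hH : IsClosed (H : Set G))
    {V : Type} [NormedAddCommGroup V] [InnerProductSpace ℂ V] [CompleteSpace V]
    (π : G →* (V ≃ₗᵢ[ℂ] V)) (hπ : ∀ u : V, Continuous fun g => π g u)
    (W : Submodule ℂ V) (hW : ∀ u : V, u ∈ W ↔ ∀ h ∈ H, π h u = u)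
    (p : V → V) (hp : ∀ u : V, p u ∈ W ∧ u - p u ∈ Wᗮ)
    (v w : V) (f : G → ℂ) (hf : ∀ g : G, f g = ⟪π g v, w⟫_ℂ) :
    (∀ (g : G), ∀ h ∈ H, ∀ h' ∈ H, f (h * g * h') = f g) ↔
    ∀ g : G, f g = ⟪π g (p v), p w⟫_ℂ :=
  matrix_coefficient_doset_invariant_iff_projection_general H π W hW p hp v w f hf
end

section
/- Let S¹ = ℝ/ℤ be the circle with geodesic distance d(x,y) = |x − y| taken modulo 1 (i.e. the distance on the additive circle ℝ/ℤ). For any λ > 0, the Gaussian kernel k(x,y) = exp(−λ d(x,y)²) on S¹ admits a positive decomposition: there exist continuous positive definite kernels k₊, k₋ on S¹ with k = k₊ − k₋. -/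
open scoped ComplexOrder

/-!
The kernel is translation invariant: `k x y = F (x - y)` with `F x = exp (-λ ‖x‖²)`.
Since `F` is real and even, its Fourier coefficients `cₙ` are real. On the fundamental domain
`[-1/2, 1/2]`, `F` is `C¹` with equal values at the endpoints, so one integration by parts gives
`cₙ = cₙ(F') / (2πin)`; as `∑ |cₙ(F')|² < ∞` by Parseval, `|cₙ| ≤ n⁻² + |cₙ(F')|²` is summable.
Writing `cₙ = cₙ⁺ - cₙ⁻`, the kernels `∑ cₙ^± eₙ(x) conj (eₙ(y))` are absolutely convergent sums
of nonnegative multiples of rank-one positive definite kernels.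
-/

open Complex ComplexConjugate MeasureTheory AddCircle
open scoped Interval ENNReal

section IsPDKernel

variable {X : Type} {ι : Type*}

theorem isPDKernel_mul_conj (φ : X → ℂ) : IsPDKernel fun x y => φ x * conj (φ y) := by
  intro N x c
  set z := ∑ i, conj (c i) * φ (x i)
  have hz : ∑ i, ∑ j, conj (c i) * c j * (φ (x i) * conj (φ (x j))) = z * conj z := by
    simp only [z, map_sum, map_mul, conj_conj, Finset.sum_mul_sum]
    exact Finset.sum_congr rfl fun i _ => Finset.sum_congr rfl fun j _ => by ring
  rw [hz, mul_conj]
  exact_mod_cast normSq_nonneg z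

theorem IsPDKernel.const_mul {k : X → X → ℂ} (hk : IsPDKernel k) {r : ℂ} (hr : 0 ≤ r) :
    IsPDKernel fun x y => r * k x y := by
  intro N x c
  simpa only [mul_left_comm _ r, ← Finset.mul_sum] using mul_nonneg hr (hk N x c)

theorem IsPDKernel.tsum {k : ι → X → X → ℂ} (hk : ∀ i, IsPDKernel (k i))
    (hs : ∀ x y, Summable fun i => k i x y) : IsPDKernel fun x y => ∑' i, k i x y := by
  intro N x c
  have hsum : ∑ i, ∑ j, conj (c i) * c j * ∑' n, k n (x i) (x j) =
      ∑' n, ∑ i, ∑ j, conj (c i) * c j * k n (x i) (x j) := by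
    simp_rw [← tsum_mul_left]
    rw [Summable.tsum_finsetSum fun i _ => summable_sum fun j _ => (hs _ _).mul_left _]
    exact Finset.sum_congr rfl fun i _ =>
      (Summable.tsum_finsetSum fun j _ => (hs _ _).mul_left _).symm
  rw [hsum]
  exact tsum_nonneg fun n => hk n N x c

end IsPDKernel

section Circle

variable {T : ℝ}

theorem fourier_sub_apply (n : ℤ) (x y : AddCircle T) :
    fourier n (x - y) = fourier n x * conj (fourier n y) := by
  rw [← fourier_neg', fourier_apply, fourier_apply, ← Circle.coe_mul, ← toCircle_add,
    smul_sub, sub_eq_add_neg]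

theorem norm_fourier_apply (n : ℤ) (x : AddCircle T) : ‖fourier n x‖ = 1 :=
  Circle.norm_coe _

theorem summable_mul_fourier {c : ℤ → ℂ} (hc : Summable fun n => ‖c n‖) (x : AddCircle T) :
    Summable fun n => c n * fourier n x :=
  .of_norm <| by simpa only [norm_mul, norm_fourier_apply, mul_one] using hc

theorem continuous_tsum_mul_fourier {c : ℤ → ℂ} (hc : Summable fun n => ‖c n‖) :
    Continuous fun x : AddCircle T => ∑' n, c n * fourier n x :=
  continuous_tsum (fun n => continuous_const.mul (map_continuous _)) hc fun n x => by
    rw [norm_mul, norm_fourier_apply, mul_one]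

theorem isPDKernel_tsum_mul_fourier_sub {c : ℤ → ℂ} (hc : 0 ≤ c)
    (hs : Summable fun n => ‖c n‖) :
    IsPDKernel fun x y : AddCircle T => ∑' n, c n * fourier n (x - y) := by
  refine IsPDKernel.tsum (fun n => ?_) fun x y => summable_mul_fourier hs (x - y)
  simpa only [fourier_sub_apply] using (isPDKernel_mul_conj (fourier n ·)).const_mul (hc n)

variable [Fact (0 < T)]

theorem conj_fourierCoeff_eq_self_of_apply_neg_eq_conj {f : AddCircle T → ℂ}
    (hf : ∀ x, f (-x) = conj (f x)) (n : ℤ) : conj (fourierCoeff f n) = fourierCoeff f n := by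
  rw [fourierCoeff, ← integral_conj, ← integral_neg_eq_self]
  congr 1 with x
  simp [hf]

theorem exists_isPDKernel_sub_eq_of_summable_fourierCoeff (f : C(AddCircle T, ℂ))
    (hs : Summable fun n => ‖fourierCoeff f n‖)
    (hreal : ∀ n, conj (fourierCoeff f n) = fourierCoeff f n) :
    ∃ kp km : AddCircle T → AddCircle T → ℂ,
      Continuous (Function.uncurry kp) ∧ IsPDKernel kp ∧
      Continuous (Function.uncurry km) ∧ IsPDKernel km ∧
      ∀ x y, f (x - y) = kp x y - km x y := by
  set Q : ℤ → ℝ := fun n => (fourierCoeff f n).re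
  set P : ℤ → ℂ := fun n => ((Q n)⁺ : ℝ)
  set M : ℤ → ℂ := fun n => ((Q n)⁻ : ℝ)
  have hP : Summable fun n => ‖P n‖ := hs.of_nonneg_of_le (fun _ => norm_nonneg _) fun n => by
    rw [norm_real, Real.norm_of_nonneg (posPart_nonneg _)]
    exact (sup_le (le_abs_self _) (abs_nonneg _)).trans (abs_re_le_norm _)
  have hM : Summable fun n => ‖M n‖ := hs.of_nonneg_of_le (fun _ => norm_nonneg _) fun n => by
    rw [norm_real, Real.norm_of_nonneg (negPart_nonneg _)]
    exact (sup_le (neg_le_abs _) (abs_nonneg _)).trans (abs_re_le_norm _)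
  refine ⟨fun x y => ∑' n, P n * fourier n (x - y), fun x y => ∑' n, M n * fourier n (x - y),
    (continuous_tsum_mul_fourier hP).comp continuous_sub,
    isPDKernel_tsum_mul_fourier_sub (fun n => zero_le_real.mpr (posPart_nonneg _)) hP,
    (continuous_tsum_mul_fourier hM).comp continuous_sub,
    isPDKernel_tsum_mul_fourier_sub (fun n => zero_le_real.mpr (negPart_nonneg _)) hM,
    fun x y => ?_⟩
  rw [← (summable_mul_fourier hP _).tsum_sub (summable_mul_fourier hM _),
    ← (has_pointwise_sum_fourier_series_of_summable hs.of_norm (x - y)).tsum_eq]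
  congr 1 with n
  rw [← sub_mul, ← ofReal_sub, posPart_sub_negPart, conj_eq_iff_re.mp (hreal n), smul_eq_mul]

end Circle

theorem ContinuousOn.memLp_restrict_Ioc {E : Type*} [NormedAddCommGroup E] {f : ℝ → E}
    {a b : ℝ} (hf : ContinuousOn f (Set.Icc a b)) (p : ℝ≥0∞) :
    MemLp f p (volume.restrict (Set.Ioc a b)) := by
  obtain ⟨C, hC⟩ := isCompact_Icc.exists_bound_of_continuousOn hf
  exact .of_bound ((hf.mono Set.Ioc_subset_Icc_self).aestronglyMeasurable measurableSet_Ioc) C <|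
    ae_restrict_of_forall_mem measurableSet_Ioc fun t ht => hC t (Set.Ioc_subset_Icc_self ht)

open Real in
theorem summable_norm_fourierCoeffOn_of_hasDerivAt {a b : ℝ} (hab : a < b) {f f' : ℝ → ℂ}
    (hf : ∀ x ∈ [[a, b]], HasDerivAt f (f' x) x)
    (hf' : MemLp f' 2 (volume.restrict (Set.Ioc a b))) (hper : f a = f b) :
    Summable fun n => ‖fourierCoeffOn hab f n‖ := by
  have hint : IntervalIntegrable f' volume a b :=
    (intervalIntegrable_iff_integrableOn_Ioc_of_le hab.le).mpr (hf'.integrable one_le_two)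
  have hparseval := (hasSum_sq_fourierCoeffOn hab hf').summable
  refine Summable.of_norm_bounded_eventually
    (((summable_one_div_int_pow.mpr one_lt_two).add hparseval).mul_left (b - a)) ?_
  filter_upwards [Filter.eventually_cofinite_ne 0] with n hn
  -- the boundary term of the integration by parts vanishes because `f a = f b`
  have hcoeff : ‖fourierCoeffOn hab f n‖ =
      (b - a) / (2 * π) * (|(n : ℝ)|⁻¹ * ‖fourierCoeffOn hab f' n‖) := by
    rw [fourierCoeffOn_of_hasDerivAt hab hn hf hint, hper, sub_self, mul_zero, zero_sub,
      ← ofReal_sub]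
    simp only [norm_mul, norm_neg, norm_div, norm_one, norm_real, norm_I, norm_intCast,
      Complex.norm_ofNat, Real.norm_eq_abs, abs_of_pos pi_pos, abs_of_pos (sub_pos.mpr hab)]
    field_simp
  set v := ‖fourierCoeffOn hab f' n‖
  have hamgm : |(n : ℝ)|⁻¹ * v ≤ (|(n : ℝ)|⁻¹) ^ 2 + v ^ 2 := by
    nlinarith [sq_nonneg (|(n : ℝ)|⁻¹ - v), sq_nonneg (|(n : ℝ)|⁻¹), sq_nonneg v]
  have hba : 0 ≤ b - a := (sub_pos.mpr hab).le
  calc ‖‖fourierCoeffOn hab f n‖‖ = (b - a) / (2 * π) * (|(n : ℝ)|⁻¹ * v) := by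
        rw [norm_norm, hcoeff]
    _ ≤ (b - a) * ((|(n : ℝ)|⁻¹) ^ 2 + v ^ 2) :=
        mul_le_mul (div_le_self hba (by linarith [pi_gt_three])) hamgm (by positivity) hba
    _ = (b - a) * (1 / (n : ℝ) ^ 2 + v ^ 2) := by rw [inv_pow, sq_abs, one_div]

theorem comp_norm_eq_liftIoc {B : Type*} {p : ℝ} [hp : Fact (0 < p)] (g : ℝ → B) :
    (fun x : AddCircle p => g ‖x‖) = liftIoc p (-(p / 2)) fun t => g |t| := by
  funext x
  obtain ⟨t, ht, rfl⟩ : ∃ t ∈ Set.Ioc (-(p / 2)) (-(p / 2) + p), (t : AddCircle p) = x :=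
    ⟨_, (equivIoc p (-(p / 2)) x).2, coe_equivIoc⟩
  rw [liftIoc_coe_apply ht, (norm_coe_eq_abs_iff p hp.out.ne').mpr]
  rw [abs_of_pos hp.out, abs_le]
  constructor <;> linarith [ht.1, ht.2]

theorem summable_norm_fourierCoeff_exp_neg_mul_norm_sq (lam : ℝ) :
    Summable fun n =>
      ‖fourierCoeff (fun x : AddCircle (1 : ℝ) => (Real.exp (-lam * ‖x‖ ^ 2) : ℂ)) n‖ := by
  set f : ℝ → ℂ := fun t => (Real.exp (-lam * t ^ 2) : ℂ)
  set f' : ℝ → ℂ := fun t => ((-2 * lam * t * Real.exp (-lam * t ^ 2) : ℝ) : ℂ)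
  have hlift : (fun x : AddCircle (1 : ℝ) => (Real.exp (-lam * ‖x‖ ^ 2) : ℂ)) =
      liftIoc 1 (-(1 / 2)) f := by
    rw [comp_norm_eq_liftIoc (p := 1) fun s => (Real.exp (-lam * s ^ 2) : ℂ)]
    simp only [_root_.sq_abs, f]
  have hderiv (t : ℝ) : HasDerivAt f (f' t) t := by
    have h : HasDerivAt (fun t => Real.exp (-lam * t ^ 2))
        (-2 * lam * t * Real.exp (-lam * t ^ 2)) t := by
      convert ((hasDerivAt_pow 2 t).const_mul (-lam)).exp using 1
      push_cast
      ring
    exact h.ofReal_comp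
  have hf' : Continuous f' := by fun_prop
  simp_rw [hlift, fourierCoeff_liftIoc_eq]
  exact summable_norm_fourierCoeffOn_of_hasDerivAt _ (fun t _ => hderiv t)
    (hf'.continuousOn.memLp_restrict_Ioc 2) (by norm_num [f])

theorem gaussian_kernel_positive_decomposition_on_circle_general
    (lam : ℝ) :
    ∃ kp km : AddCircle (1 : ℝ) → AddCircle (1 : ℝ) → ℂ,
      Continuous (Function.uncurry kp) ∧ IsPDKernel kp ∧
      Continuous (Function.uncurry km) ∧ IsPDKernel km ∧
      ∀ x y : AddCircle (1 : ℝ),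
        (Real.exp (-lam * dist x y ^ 2) : ℂ) = kp x y - km x y := by
  let gaussian : C(AddCircle (1 : ℝ), ℂ) :=
    ⟨fun x => (Real.exp (-lam * ‖x‖ ^ 2) : ℂ), by fun_prop⟩
  obtain ⟨kp, km, hkp, hpd, hkm, hmd, hsub⟩ :=
    exists_isPDKernel_sub_eq_of_summable_fourierCoeff gaussian
      (summable_norm_fourierCoeff_exp_neg_mul_norm_sq lam)
      (conj_fourierCoeff_eq_self_of_apply_neg_eq_conj fun x => by
        simp only [gaussian, ContinuousMap.coe_mk, norm_neg, conj_ofReal])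
  exact ⟨kp, km, hkp, hpd, hkm, hmd, fun x y => by rw [dist_eq_norm]; exact hsub x y⟩

/-- the Gaussian kernel `exp(-λ d(x,y)²)` on the circle `ℝ/ℤ` (with the
quotient metric) admits a positive decomposition into continuous positive definite
kernels, for every `λ > 0`. -/
theorem gaussian_kernel_positive_decomposition_on_circle
    (lam : ℝ) (hlam : 0 < lam) :
    ∃ kp km : AddCircle (1 : ℝ) → AddCircle (1 : ℝ) → ℂ,
      Continuous (Function.uncurry kp) ∧ IsPDKernel kp ∧
      Continuous (Function.uncurry km) ∧ IsPDKernel km ∧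
      ∀ x y : AddCircle (1 : ℝ),
        (Real.exp (-lam * dist x y ^ 2) : ℂ) = kp x y - km x y :=
  gaussian_kernel_positive_decomposition_on_circle_general lam
end

section
/- Let n, m ∈ ℕ, let G = ℝⁿ × (ℝ/ℤ)ᵐ, and equip G with the product distance whose square is d((x,u),(y,v))² = ∑ᵢ |xᵢ − yᵢ|² + ∑ⱼ d_{S¹}(uⱼ, vⱼ)², where d_{S¹} is the quotient metric on ℝ/ℤ. Then for any λ > 0, the Gaussian kernel k((x,u),(y,v)) = exp(−λ d((x,u),(y,v))²) admits a positive decomposition into continuous positive definite kernels on G. -/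
open scoped ComplexOrder

/-- The squared product distance on `ℝⁿ × (ℝ/ℤ)ᵐ`:
`d((x,u),(y,v))² = ∑ᵢ |xᵢ − yᵢ|² + ∑ⱼ d_{S¹}(uⱼ, vⱼ)²`. -/
noncomputable def distSq (n m : ℕ)
    (a b : (Fin n → ℝ) × (Fin m → AddCircle (1 : ℝ))) : ℝ :=
  ∑ i, |a.1 i - b.1 i| ^ 2 + ∑ j, dist (a.2 j) (b.2 j) ^ 2

/-!
The Gaussian factors over the coordinates. On `ℝⁿ`,
`exp (-λ‖x - y‖²) = e^{-λ‖x‖²} e^{2λ⟪x, y⟫} e^{-λ‖y‖²}` is positive semidefinite by the Schur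
product theorem, since `exp` has nonnegative Taylor coefficients. On `ℝ/ℤ`,
`P(u, v) = 1/2 - d(u, v)` is the length of the intersection of the arcs of length `1/2` centred at
`u` and `v`, hence positive semidefinite, and `d² = 1/4 - P + P²` gives
`exp (-λd²) = e^{-λ/4} e^{λP} (cosh (λP²) - sinh (λP²))`, a difference of positive semidefinite
kernels. Such differences are closed under products:
`(p₁ - q₁)(p₂ - q₂) = (p₁p₂ + q₁q₂) - (p₁q₂ + q₁p₂)`.

A kernel `k : X → X → ℝ` is treated as the matrix `Matrix.of k` indexed by `X`; since
`Matrix.PosSemidef` only tests finitely supported vectors, this is positive semidefiniteness of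
the kernel.
-/

open Matrix Metric Set MeasureTheory Function

namespace Matrix

variable {n R : Type*}

theorem posSemidef_of_forall_finset_submatrix [Ring R] [PartialOrder R] [StarRing R]
    {M : Matrix n n R} (h : ∀ s : Finset n, (M.submatrix ((↑) : s → n) (↑)).PosSemidef) :
    M.PosSemidef := by
  classical
  refine ⟨Matrix.ext fun i j => ?_, fun x => ?_⟩
  · exact (h {i, j}).isHermitian.apply ⟨i, by simp⟩ ⟨j, by simp⟩
  · simpa [Finsupp.sum, ← Finset.sum_attach x.support, ← Finset.subtype_mem_eq_attach,
      ← Finsupp.subtypeDomain_apply, ← Finsupp.support_subtypeDomain] using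
      (h x.support).2 (x.subtypeDomain (· ∈ x.support))

section Topology

variable [Ring R] [PartialOrder R] [StarRing R] [TopologicalSpace R] [IsTopologicalRing R]
  [ContinuousStar R] [OrderClosedTopology R]

theorem isClosed_setOf_posSemidef : IsClosed {M : Matrix n n R | M.PosSemidef} := by
  simp only [PosSemidef, IsHermitian, Set.ofPred_and, Set.ofPred_forall]
  refine (isClosed_eq continuous_id.matrix_conjTranspose continuous_id).inter
    (isClosed_iInter fun x => isClosed_le continuous_const ?_)
  exact continuous_finsetSum _ fun i _ => continuous_finsetSum _ fun j _ =>
    (continuous_const.mul (continuous_id.matrix_elem i j)).mul continuous_const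

theorem PosSemidef.of_hasSum [AddLeftMono R] {ι : Type*} {F : ι → Matrix n n R}
    {M : Matrix n n R} (hF : ∀ k, (F k).PosSemidef) (hM : HasSum F M) : M.PosSemidef :=
  isClosed_setOf_posSemidef.mem_of_tendsto hM
    (Filter.Eventually.of_forall fun s => posSemidef_sum s fun k _ => hF k)

end Topology

theorem posSemidef_gram' {𝕜 E : Type*} [RCLike 𝕜] [SeminormedAddCommGroup E]
    [InnerProductSpace 𝕜 E] (v : n → E) : (gram 𝕜 v).PosSemidef :=
  posSemidef_of_forall_finset_submatrix fun _ => posSemidef_gram 𝕜 _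

theorem posSemidef_const_one {𝕜 : Type*} [RCLike 𝕜] : (of fun _ _ : n => (1 : 𝕜)).PosSemidef := by
  simpa [gram] using posSemidef_gram' (𝕜 := 𝕜) fun _ : n => (1 : 𝕜)

theorem PosSemidef.map_pow {𝕜 : Type*} [RCLike 𝕜] {A : Matrix n n 𝕜} (hA : A.PosSemidef)
    (k : ℕ) : (A.map (· ^ k)).PosSemidef := by
  induction k with
  | zero => convert posSemidef_const_one using 1; ext; simp
  | succ k ih => convert ih.hadamard hA using 1; ext; simp [pow_succ]

theorem PosSemidef.map_of_hasSum {A : Matrix n n ℝ} (hA : A.PosSemidef) {f : ℝ → ℝ}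
    {e : ℕ → ℕ} {c : ℕ → ℝ} (hc : ∀ k, 0 ≤ c k)
    (hf : ∀ x, HasSum (fun k => x ^ e k / c k) (f x)) : (A.map f).PosSemidef := by
  refine PosSemidef.of_hasSum (F := fun k => (c k)⁻¹ • A.map (· ^ e k))
    (fun k => (hA.map_pow (e k)).smul (inv_nonneg.mpr (hc k))) ?_
  refine Pi.hasSum.mpr fun i => Pi.hasSum.mpr fun j => ?_
  simpa [div_eq_inv_mul] using hf (A i j)

theorem PosSemidef.map_exp {A : Matrix n n ℝ} (hA : A.PosSemidef) :
    (A.map Real.exp).PosSemidef :=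
  hA.map_of_hasSum (e := id) (fun k => k.factorial.cast_nonneg) fun x => by
    simpa [Real.exp_eq_exp_ℝ] using NormedSpace.expSeries_div_hasSum_exp x

theorem PosSemidef.map_cosh {A : Matrix n n ℝ} (hA : A.PosSemidef) :
    (A.map Real.cosh).PosSemidef :=
  hA.map_of_hasSum (fun k => (2 * k).factorial.cast_nonneg) Real.hasSum_cosh

theorem PosSemidef.map_sinh {A : Matrix n n ℝ} (hA : A.PosSemidef) :
    (A.map Real.sinh).PosSemidef :=
  hA.map_of_hasSum (fun k => (2 * k + 1).factorial.cast_nonneg) Real.hasSum_sinh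

open scoped MatrixOrder in
theorem PosSemidef.map_ofReal {A : Matrix n n ℝ} (hA : A.PosSemidef) :
    (A.map ((↑) : ℝ → ℂ)).PosSemidef := by
  classical
  refine posSemidef_of_forall_finset_submatrix fun s => ?_
  obtain ⟨B, hB⟩ :=
    CStarAlgebra.nonneg_iff_eq_star_mul_self.mp (hA.submatrix ((↑) : s → n)).nonneg
  have hsub : (A.map ((↑) : ℝ → ℂ)).submatrix ((↑) : s → n) (↑) =
      (B.map ((↑) : ℝ → ℂ))ᴴ * B.map (↑) := by
    rw [submatrix_map, hB, star_eq_conjTranspose]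
    ext i j
    simp [mul_apply]
  rw [hsub]
  exact posSemidef_conjTranspose_mul_self _

end Matrix

theorem MeasureTheory.posSemidef_matrix_measure_inter' {α ι : Type*} [MeasurableSpace α]
    {μ : Measure α} {s : ι → Set α} (hs : ∀ i, MeasurableSet (s i)) (hμs : ∀ i, μ (s i) ≠ ⊤) :
    (of fun i j : ι => μ.real (s i ∩ s j)).PosSemidef :=
  posSemidef_of_forall_finset_submatrix fun _ =>
    posSemidef_matrix_measure_inter (fun _ => hs _) fun _ => hμs _

theorem posSemidef_gaussian_kernel {E : Type*} [NormedAddCommGroup E] [InnerProductSpace ℝ E]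
    {lam : ℝ} (hlam : 0 ≤ lam) :
    (of fun x y : E => Real.exp (-lam * ‖x - y‖ ^ 2)).PosSemidef := by
  have hexp :=
    ((posSemidef_gram' (𝕜 := ℝ) (id : E → E)).smul (mul_nonneg zero_le_two hlam)).map_exp
  have hfactor : (of fun x y : E => Real.exp (-lam * ‖x - y‖ ^ 2)) =
      gram ℝ (fun x : E => Real.exp (-lam * ‖x‖ ^ 2)) ⊙ ((2 * lam) • gram ℝ id).map Real.exp := by
    ext x y
    simp only [of_apply, hadamard_apply, gram_apply, map_apply, Matrix.smul_apply, id,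
      smul_eq_mul, norm_sub_sq_real, RCLike.inner_apply, conj_trivial]
    rw [← Real.exp_add, ← Real.exp_add]
    ring_nf
  rw [hfactor]
  exact (posSemidef_gram' _).hadamard hexp

theorem isPDKernel_of_posSemidef {X : Type} {k : X → X → ℝ} (hk : (of k).PosSemidef) :
    IsPDKernel fun x y => (k x y : ℂ) := by
  intro N x c
  have hform := (hk.map_ofReal.submatrix x).dotProduct_mulVec_nonneg c
  simp only [dotProduct, mulVec, Finset.mul_sum] at hform
  refine hform.trans_eq (Finset.sum_congr rfl fun i _ => Finset.sum_congr rfl fun j _ => ?_)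
  simp only [Pi.star_apply, Complex.star_def, submatrix_apply, map_apply, of_apply]
  ring

section Decomposable

variable {X : Type*} [TopologicalSpace X]

def IsPDDecomposable (k : X → X → ℝ) : Prop :=
  ∃ p q : X → X → ℝ, Continuous (uncurry p) ∧ (of p).PosSemidef ∧
    Continuous (uncurry q) ∧ (of q).PosSemidef ∧ k = p - q

namespace IsPDDecomposable

theorem of_posSemidef {k : X → X → ℝ} (hc : Continuous (uncurry k)) (hk : (of k).PosSemidef) :
    IsPDDecomposable k :=
  ⟨k, 0, hc, hk, continuous_const, PosSemidef.zero, (sub_zero k).symm⟩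

theorem mul {k₁ k₂ : X → X → ℝ} (h₁ : IsPDDecomposable k₁) (h₂ : IsPDDecomposable k₂) :
    IsPDDecomposable (k₁ * k₂) := by
  obtain ⟨p₁, q₁, cp₁, hp₁, cq₁, hq₁, rfl⟩ := h₁
  obtain ⟨p₂, q₂, cp₂, hp₂, cq₂, hq₂, rfl⟩ := h₂
  exact ⟨p₁ * p₂ + q₁ * q₂, p₁ * q₂ + q₁ * p₂, (cp₁.mul cp₂).add (cq₁.mul cq₂),
    (hp₁.hadamard hp₂).add (hq₁.hadamard hq₂), (cp₁.mul cq₂).add (cq₁.mul cp₂),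
    (hp₁.hadamard hq₂).add (hq₁.hadamard hp₂), by ring⟩

theorem prod {ι : Type*} (s : Finset ι) {k : ι → X → X → ℝ}
    (h : ∀ i ∈ s, IsPDDecomposable (k i)) : IsPDDecomposable (∏ i ∈ s, k i) := by
  induction s using Finset.cons_induction with
  | empty => exact of_posSemidef continuous_const posSemidef_const_one
  | cons i s hi ih =>
    rw [Finset.prod_cons]
    exact (h i (s.mem_cons_self i)).mul (ih fun j hj => h j (Finset.mem_cons_of_mem hj))

theorem comp {Y : Type*} [TopologicalSpace Y] {k : X → X → ℝ} (h : IsPDDecomposable k)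
    {f : Y → X} (hf : Continuous f) : IsPDDecomposable fun x y => k (f x) (f y) := by
  obtain ⟨p, q, cp, hp, cq, hq, rfl⟩ := h
  exact ⟨fun x y => p (f x) (f y), fun x y => q (f x) (f y), cp.comp (hf.prodMap hf),
    hp.submatrix f, cq.comp (hf.prodMap hf), hq.submatrix f, rfl⟩

theorem exp_neg {k : X → X → ℝ} (hc : Continuous (uncurry k)) (hk : (of k).PosSemidef) :
    IsPDDecomposable fun x y => Real.exp (-k x y) :=
  ⟨fun x y => Real.cosh (k x y), fun x y => Real.sinh (k x y), Real.continuous_cosh.comp hc,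
    hk.map_cosh, Real.continuous_sinh.comp hc, hk.map_sinh, by
      ext x y; simp [Real.cosh_sub_sinh]⟩

end IsPDDecomposable

end Decomposable

namespace AddCircle

theorem norm_coe_lt_iff_abs_lt {w r : ℝ} (hw : |w| ≤ 1 - r) :
    ‖(w : AddCircle (1 : ℝ))‖ < r ↔ |w| < r := by
  rw [UnitAddCircle.norm_eq]
  refine ⟨fun h => ?_, fun h => (show |w - round w| ≤ |w| by simpa using round_le w 0).trans_lt h⟩
  obtain h0 | h0 := eq_or_ne (round w) 0
  · simpa [h0] using h
  have h1 : (1 : ℝ) ≤ |(round w : ℝ)| := by exact_mod_cast Int.one_le_abs h0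
  have := abs_sub_abs_le_abs_sub (round w : ℝ) w
  rw [abs_sub_comm] at this
  linarith

theorem coe_preimage_ball_inter_ball_inter_Ioc {x y : ℝ} (hxy : |x - y| ≤ 1 / 2) :
    (↑) ⁻¹' (ball (x : AddCircle (1 : ℝ)) (1 / 4) ∩ ball (y : AddCircle (1 : ℝ)) (1 / 4)) ∩
      Ioc ((x + y) / 2 - 1 / 2) ((x + y) / 2 - 1 / 2 + 1) = ball x (1 / 4) ∩ ball y (1 / 4) := by
  obtain ⟨hxy₁, hxy₂⟩ := abs_le.mp hxy
  ext z
  simp only [mem_inter_iff, mem_preimage, mem_ball, mem_Ioc, dist_eq_norm, Real.norm_eq_abs,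
    ← QuotientAddGroup.mk_sub]
  constructor
  · rintro ⟨⟨hx, hy⟩, hz₁, hz₂⟩
    rw [norm_coe_lt_iff_abs_lt (abs_le.mpr ⟨by linarith, by linarith⟩)] at hx hy
    exact ⟨hx, hy⟩
  · rintro ⟨hx, hy⟩
    obtain ⟨hx₁, hx₂⟩ := abs_lt.mp hx
    obtain ⟨hy₁, hy₂⟩ := abs_lt.mp hy
    rw [norm_coe_lt_iff_abs_lt (abs_le.mpr ⟨by linarith, by linarith⟩),
      norm_coe_lt_iff_abs_lt (abs_le.mpr ⟨by linarith, by linarith⟩)]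
    exact ⟨⟨hx, hy⟩, by linarith, by linarith⟩

theorem exists_coe_eq_coe_abs_sub_eq_dist (u v : AddCircle (1 : ℝ)) :
    ∃ x y : ℝ, (x : AddCircle (1 : ℝ)) = u ∧ (y : AddCircle (1 : ℝ)) = v ∧
      |x - y| = dist u v := by
  obtain ⟨x, rfl⟩ := QuotientAddGroup.mk_surjective u
  obtain ⟨t, ht⟩ := QuotientAddGroup.mk_surjective (v - (x : AddCircle (1 : ℝ)))
  have hround : ((round t : ℝ) : AddCircle (1 : ℝ)) = 0 :=
    (coe_eq_zero_iff 1).mpr ⟨round t, by simp⟩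
  refine ⟨x, x + (t - round t), rfl, ?_, ?_⟩
  · rw [coe_add, coe_sub, ht, hround, sub_zero, add_sub_cancel]
  · rw [dist_comm, dist_eq_norm, ← ht, UnitAddCircle.norm_eq, sub_add_cancel_left, abs_neg]

theorem volume_real_ball_inter_ball (u v : AddCircle (1 : ℝ)) :
    volume.real (ball u (1 / 4) ∩ ball v (1 / 4)) = 1 / 2 - dist u v := by
  obtain ⟨x, y, rfl, rfl, hxy⟩ := exists_coe_eq_coe_abs_sub_eq_dist u v
  have hle : |x - y| ≤ 1 / 2 := by
    simpa [hxy, dist_eq_norm] using norm_le_half_period 1 one_ne_zero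
  rw [measureReal_def, add_projection_respects_measure 1 ((x + y) / 2 - 1 / 2)
    (measurableSet_ball.inter measurableSet_ball), coe_preimage_ball_inter_ball_inter_Ioc hle,
    Real.ball_eq_Ioo, Real.ball_eq_Ioo, Ioo_inter_Ioo, Real.volume_Ioo, ENNReal.toReal_ofReal]
  · rw [← hxy, min_add_add_right, max_sub_sub_right, ← max_sub_min_eq_abs']
    ring
  · rw [min_add_add_right, max_sub_sub_right]
    linarith [max_sub_min_eq_abs' x y]

theorem posSemidef_half_sub_dist :
    (of fun u v : AddCircle (1 : ℝ) => 1 / 2 - dist u v).PosSemidef := by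
  have h := posSemidef_matrix_measure_inter' (μ := volume)
    (s := fun u : AddCircle (1 : ℝ) => ball u (1 / 4)) (fun _ => measurableSet_ball)
    fun _ => measure_ne_top _ _
  simpa only [volume_real_ball_inter_ball] using h

theorem isPDDecomposable_gaussian {lam : ℝ} (hlam : 0 ≤ lam) :
    IsPDDecomposable fun u v : AddCircle (1 : ℝ) => Real.exp (-lam * dist u v ^ 2) := by
  set P : AddCircle (1 : ℝ) → AddCircle (1 : ℝ) → ℝ := fun u v => 1 / 2 - dist u v with hP
  have hexp : (of fun u v => Real.exp (-lam / 4) * Real.exp (lam * P u v)).PosSemidef :=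
    (posSemidef_half_sub_dist.smul hlam).map_exp.smul (Real.exp_pos _).le
  have hsq : (of fun u v => lam * P u v ^ 2).PosSemidef :=
    (posSemidef_half_sub_dist.map_pow 2).smul hlam
  convert (IsPDDecomposable.of_posSemidef (by fun_prop) hexp).mul
    (IsPDDecomposable.exp_neg (by fun_prop) hsq) using 1
  ext u v
  simp only [Pi.mul_apply, hP, ← Real.exp_add]
  ring_nf

end AddCircle

theorem exp_neg_mul_distSq (n m : ℕ) (lam : ℝ) (a b : (Fin n → ℝ) × (Fin m → AddCircle (1 : ℝ))) :
    Real.exp (-lam * distSq n m a b) =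
      Real.exp (-lam * ‖WithLp.toLp 2 a.1 - WithLp.toLp 2 b.1‖ ^ 2) *
        ∏ j, Real.exp (-lam * dist (a.2 j) (b.2 j) ^ 2) := by
  rw [← Real.exp_sum, ← Real.exp_add, distSq, ← WithLp.toLp_sub, EuclideanSpace.norm_sq_eq]
  simp [mul_add, Finset.mul_sum]

/-- the Gaussian kernel `exp(-λ d(·,·)²)` on `G = ℝⁿ × (ℝ/ℤ)ᵐ` (a model
of an arbitrary connected Abelian Lie group), with the squared product distance,
admits a positive decomposition into continuous positive definite kernels, for every
`λ > 0`. -/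
theorem gaussian_kernel_positive_decomposition_on_abelian_lie_group
    (n m : ℕ) (lam : ℝ) (hlam : 0 < lam) :
    ∃ kp km : (Fin n → ℝ) × (Fin m → AddCircle (1 : ℝ)) →
              (Fin n → ℝ) × (Fin m → AddCircle (1 : ℝ)) → ℂ,
      Continuous (Function.uncurry kp) ∧ IsPDKernel kp ∧
      Continuous (Function.uncurry km) ∧ IsPDKernel km ∧
      ∀ a b, (Real.exp (-lam * distSq n m a b) : ℂ) = kp a b - km a b := by
  have hflat := (IsPDDecomposable.of_posSemidef (by fun_prop)
    (posSemidef_gaussian_kernel (E := EuclideanSpace ℝ (Fin n)) hlam.le)).comp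
    (by fun_prop : Continuous fun a : (Fin n → ℝ) × (Fin m → AddCircle (1 : ℝ)) =>
      WithLp.toLp 2 a.1)
  have hcirc := IsPDDecomposable.prod Finset.univ fun j _ =>
    (AddCircle.isPDDecomposable_gaussian hlam.le).comp
      (by fun_prop : Continuous fun a : (Fin n → ℝ) × (Fin m → AddCircle (1 : ℝ)) => a.2 j)
  obtain ⟨p, q, cp, hp, cq, hq, hpq⟩ := hflat.mul hcirc
  refine ⟨fun a b => p a b, fun a b => q a b, Complex.continuous_ofReal.comp cp,
    isPDKernel_of_posSemidef hp, Complex.continuous_ofReal.comp cq,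
    isPDKernel_of_posSemidef hq, fun a b => ?_⟩
  have hab := congrFun (congrFun hpq a) b
  simp only [Pi.mul_apply, Finset.prod_apply, Pi.sub_apply] at hab
  rw [exp_neg_mul_distSq, hab, Complex.ofReal_sub]
end
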